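/- arXiv:math/0108085 — 3 statements merged into one kernel-verified Lean document; each statement's English description precedes it below -/
import Mathlib

section
/- For all smooth 1-periodic functions ρ, ψ : ℝ² → ℝ, one has the identity ∫_D J(ρ,ψ) Δρ dx dz = ∫_D ρ_x ρ_z (ψ_xx − ψ_zz) dx dz − ∫_D (ρ_x² − ρ_z²) ψ_xz dx dz. -/
open MeasureTheory Real

/-- Partial derivative in the `x` direction. -/
noncomputable def px (u : ℝ × ℝ → ℝ) : ℝ × ℝ → ℝ := fun p => fderiv ℝ u p (1, 0)

/-- Partial derivative in the `z` direction. -/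
noncomputable def pz (u : ℝ × ℝ → ℝ) : ℝ × ℝ → ℝ := fun p => fderiv ℝ u p (0, 1)

/-- The Laplacian `Δu = u_xx + u_zz`. -/
noncomputable def lap (u : ℝ × ℝ → ℝ) : ℝ × ℝ → ℝ := fun p => px (px u) p + pz (pz u) p

/-- The Jacobian operator `J(a,b) = a_x b_z − a_z b_x`. -/
noncomputable def Jac (a b : ℝ × ℝ → ℝ) : ℝ × ℝ → ℝ :=
  fun p => px a p * pz b p - pz a p * px b p

/-- `u` is 1-periodic in both variables. -/
def Per (u : ℝ × ℝ → ℝ) : Prop :=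
  (∀ x z : ℝ, u (x + 1, z) = u (x, z)) ∧ (∀ x z : ℝ, u (x, z + 1) = u (x, z))

/-- The unit square `D = [0,1]²`. -/
def unitSq : Set (ℝ × ℝ) := Set.Icc 0 1 ×ˢ Set.Icc 0 1

/- ### Auxiliary lemmas -/

lemma contDiff_pd {u : ℝ × ℝ → ℝ} (hu : ContDiff ℝ (⊤ : ℕ∞) u) (v : ℝ × ℝ) :
    ContDiff ℝ (⊤ : ℕ∞) (fun p => fderiv ℝ u p v) :=
  (ContinuousLinearMap.apply ℝ ℝ v).contDiff.comp (hu.fderiv_right (by simp))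

lemma fderiv_pd {u : ℝ × ℝ → ℝ} (hu : ContDiff ℝ (⊤ : ℕ∞) u) (v p w : ℝ × ℝ) :
    fderiv ℝ (fun q => fderiv ℝ u q v) p w = fderiv ℝ (fderiv ℝ u) p w v := by
  have h1 : DifferentiableAt ℝ (fderiv ℝ u) p :=
    (hu.fderiv_right (m := (⊤ : ℕ∞)) (by simp)).differentiable (by simp) p
  have := ((ContinuousLinearMap.apply ℝ ℝ v).hasFDerivAt.comp p h1.hasFDerivAt).fderiv
  rw [show (fun q => fderiv ℝ u q v) = (ContinuousLinearMap.apply ℝ ℝ v) ∘ (fderiv ℝ u) from rfl,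
    this]
  rfl

lemma pd_comm {u : ℝ × ℝ → ℝ} (hu : ContDiff ℝ (⊤ : ℕ∞) u) (v w p : ℝ × ℝ) :
    fderiv ℝ (fun q => fderiv ℝ u q v) p w = fderiv ℝ (fun q => fderiv ℝ u q w) p v := by
  rw [fderiv_pd hu, fderiv_pd hu]
  exact (hu.contDiffAt.isSymmSndFDerivAt (by rw [minSmoothness_of_isRCLikeNormedField]; exact WithTop.coe_le_coe.mpr (le_top : (2 : ℕ∞) ≤ ⊤))).eq w v

lemma pd_mul {u w : ℝ × ℝ → ℝ} {p : ℝ × ℝ} (hu : DifferentiableAt ℝ u p)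
    (hw : DifferentiableAt ℝ w p) (v : ℝ × ℝ) :
    fderiv ℝ (fun q => u q * w q) p v = fderiv ℝ u p v * w p + u p * fderiv ℝ w p v := by
  rw [fderiv_fun_mul hu hw]; simp; ring

lemma pd_sub {u w : ℝ × ℝ → ℝ} {p : ℝ × ℝ} (hu : DifferentiableAt ℝ u p)
    (hw : DifferentiableAt ℝ w p) (v : ℝ × ℝ) :
    fderiv ℝ (fun q => u q - w q) p v = fderiv ℝ u p v - fderiv ℝ w p v := by
  rw [fderiv_fun_sub hu hw]; rfl

lemma pd_add {u w : ℝ × ℝ → ℝ} {p : ℝ × ℝ} (hu : DifferentiableAt ℝ u p)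
    (hw : DifferentiableAt ℝ w p) (v : ℝ × ℝ) :
    fderiv ℝ (fun q => u q + w q) p v = fderiv ℝ u p v + fderiv ℝ w p v := by
  rw [fderiv_fun_add hu hw]; rfl

lemma pd_div_const {u : ℝ × ℝ → ℝ} {p : ℝ × ℝ} (hu : DifferentiableAt ℝ u p) (v : ℝ × ℝ) (c : ℝ) :
    fderiv ℝ (fun q => u q / c) p v = fderiv ℝ u p v / c := by
  simp only [div_eq_mul_inv]
  rw [fderiv_mul_const hu]
  simp [mul_comm]

/-- Derivatives of a periodic function are periodic. -/
lemma per_pd {u : ℝ × ℝ → ℝ} (hu : ContDiff ℝ (⊤ : ℕ∞) u) (hp : Per u) (v : ℝ × ℝ) :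
    Per (fun p => fderiv ℝ u p v) := by
  have key : ∀ c : ℝ × ℝ, (∀ p : ℝ × ℝ, u (p + c) = u p) →
      ∀ p : ℝ × ℝ, fderiv ℝ u (p + c) = fderiv ℝ u p := by
    intro c h p
    have h1 : HasFDerivAt (fun q : ℝ × ℝ => u (q + c)) (fderiv ℝ u (p + c)) p := by
      have := ((hu.differentiable (by simp) (p + c)).hasFDerivAt.comp p
        ((hasFDerivAt_id p).add_const c))
      simpa [Function.comp_def] using this
    rw [funext h] at h1
    exact h1.fderiv.symm
  constructor
  · intro x z
    have h0 : ∀ p : ℝ × ℝ, u (p + (1, 0)) = u p := fun p => by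
      rw [show p + ((1:ℝ), (0:ℝ)) = (p.1 + 1, p.2) by simp [Prod.ext_iff]]
      exact hp.1 p.1 p.2
    have h1 := key _ h0 (x, z)
    rw [show ((x, z) : ℝ × ℝ) + (1, 0) = (x + 1, z) by simp] at h1
    show fderiv ℝ u (x + 1, z) v = fderiv ℝ u (x, z) v
    rw [h1]
  · intro x z
    have h0 : ∀ p : ℝ × ℝ, u (p + (0, 1)) = u p := fun p => by
      rw [show p + ((0:ℝ), (1:ℝ)) = (p.1, p.2 + 1) by simp [Prod.ext_iff]]
      exact hp.2 p.1 p.2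
    have h1 := key _ h0 (x, z)
    rw [show ((x, z) : ℝ × ℝ) + (0, 1) = (x, z + 1) by simp] at h1
    show fderiv ℝ u (x, z + 1) v = fderiv ℝ u (x, z) v
    rw [h1]

lemma inner_ftc_x {f : ℝ × ℝ → ℝ} (hf : ContDiff ℝ (⊤ : ℕ∞) f)
    (hp : ∀ x z : ℝ, f (x + 1, z) = f (x, z)) (z : ℝ) :
    (∫ x in Set.Icc (0:ℝ) 1, fderiv ℝ f (x, z) (1, 0)) = 0 := by
  have hd : ∀ x : ℝ, HasDerivAt (fun x => f (x, z)) (fderiv ℝ f (x, z) (1, 0)) x := by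
    intro x
    exact (hf.differentiable (by simp) (x, z)).hasFDerivAt.comp_hasDerivAt x
      ((hasDerivAt_id x).prodMk (hasDerivAt_const x z))
  have hc : Continuous (fun x : ℝ => fderiv ℝ f (x, z) (1, 0)) :=
    ((contDiff_pd hf ((1:ℝ), (0:ℝ))).continuous).comp (continuous_id.prodMk continuous_const)
  rw [MeasureTheory.integral_Icc_eq_integral_Ioc, ← intervalIntegral.integral_of_le zero_le_one,
    intervalIntegral.integral_eq_sub_of_hasDerivAt (fun x _ => hd x)
      (hc.intervalIntegrable 0 1)]
  have := hp 0 z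
  rw [zero_add] at this
  rw [this, sub_self]

lemma inner_ftc_z {f : ℝ × ℝ → ℝ} (hf : ContDiff ℝ (⊤ : ℕ∞) f)
    (hp : ∀ x z : ℝ, f (x, z + 1) = f (x, z)) (x : ℝ) :
    (∫ z in Set.Icc (0:ℝ) 1, fderiv ℝ f (x, z) (0, 1)) = 0 := by
  have hd : ∀ z : ℝ, HasDerivAt (fun z => f (x, z)) (fderiv ℝ f (x, z) (0, 1)) z := by
    intro z
    exact (hf.differentiable (by simp) (x, z)).hasFDerivAt.comp_hasDerivAt z
      ((hasDerivAt_const z x).prodMk (hasDerivAt_id z))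
  have hc : Continuous (fun z : ℝ => fderiv ℝ f (x, z) (0, 1)) :=
    ((contDiff_pd hf ((0:ℝ), (1:ℝ))).continuous).comp (continuous_const.prodMk continuous_id)
  rw [MeasureTheory.integral_Icc_eq_integral_Ioc, ← intervalIntegral.integral_of_le zero_le_one,
    intervalIntegral.integral_eq_sub_of_hasDerivAt (fun z _ => hd z)
      (hc.intervalIntegrable 0 1)]
  have := hp x 0
  rw [zero_add] at this
  rw [this, sub_self]

lemma integral_px_zero {f : ℝ × ℝ → ℝ} (hf : ContDiff ℝ (⊤ : ℕ∞) f) (hp : Per f) :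
    (∫ p in unitSq, px f p) = 0 := by
  have hc : Continuous (fun p : ℝ × ℝ => fderiv ℝ f p (1, 0)) :=
    (contDiff_pd hf ((1:ℝ), (0:ℝ))).continuous
  have hint : IntegrableOn (fun p : ℝ × ℝ => fderiv ℝ f p (1, 0))
      (Set.Icc 0 1 ×ˢ Set.Icc (0:ℝ) 1) ((volume : Measure ℝ).prod volume) :=
    hc.continuousOn.integrableOn_compact (isCompact_Icc.prod isCompact_Icc)
  rw [unitSq]
  show ∫ p in (Set.Icc 0 1 ×ˢ Set.Icc (0:ℝ) 1), fderiv ℝ f p (1, 0)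
      ∂((volume : Measure ℝ).prod volume) = 0
  rw [← Measure.prod_restrict]
  rw [integral_prod_symm _ (by rwa [Measure.prod_restrict])]
  simp only [inner_ftc_x hf hp.1]
  simp

lemma integral_pz_zero {f : ℝ × ℝ → ℝ} (hf : ContDiff ℝ (⊤ : ℕ∞) f) (hp : Per f) :
    (∫ p in unitSq, pz f p) = 0 := by
  have hc : Continuous (fun p : ℝ × ℝ => fderiv ℝ f p (0, 1)) :=
    (contDiff_pd hf ((0:ℝ), (1:ℝ))).continuous
  have hint : IntegrableOn (fun p : ℝ × ℝ => fderiv ℝ f p (0, 1))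
      (Set.Icc 0 1 ×ˢ Set.Icc (0:ℝ) 1) ((volume : Measure ℝ).prod volume) :=
    hc.continuousOn.integrableOn_compact (isCompact_Icc.prod isCompact_Icc)
  rw [unitSq]
  show ∫ p in (Set.Icc 0 1 ×ˢ Set.Icc (0:ℝ) 1), fderiv ℝ f p (0, 1)
      ∂((volume : Measure ℝ).prod volume) = 0
  rw [← Measure.prod_restrict]
  rw [integral_prod _ (by rwa [Measure.prod_restrict])]
  simp only [inner_ftc_z hf hp.2]
  simp

/-- The flux function `F = ψ_z (ρ_x² − ρ_z²)/2 − ψ_x ρ_x ρ_z`. -/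
noncomputable def FF (ρ ψ : ℝ × ℝ → ℝ) : ℝ × ℝ → ℝ :=
  fun q => pz ψ q * (px ρ q * px ρ q - pz ρ q * pz ρ q) / 2 - px ψ q * (px ρ q * pz ρ q)

/-- The flux function `G = ψ_x (ρ_x² − ρ_z²)/2 + ψ_z ρ_x ρ_z`. -/
noncomputable def GG (ρ ψ : ℝ × ℝ → ℝ) : ℝ × ℝ → ℝ :=
  fun q => px ψ q * (px ρ q * px ρ q - pz ρ q * pz ρ q) / 2 + pz ψ q * (px ρ q * pz ρ q)

lemma FF_contDiff {ρ ψ : ℝ × ℝ → ℝ} (hρ : ContDiff ℝ (⊤ : ℕ∞) ρ) (hψ : ContDiff ℝ (⊤ : ℕ∞) ψ) :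
    ContDiff ℝ (⊤ : ℕ∞) (FF ρ ψ) :=
  (((contDiff_pd hψ _).mul (((contDiff_pd hρ _).mul (contDiff_pd hρ _)).sub
    ((contDiff_pd hρ _).mul (contDiff_pd hρ _)))).div_const 2).sub
    ((contDiff_pd hψ _).mul ((contDiff_pd hρ _).mul (contDiff_pd hρ _)))

lemma GG_contDiff {ρ ψ : ℝ × ℝ → ℝ} (hρ : ContDiff ℝ (⊤ : ℕ∞) ρ) (hψ : ContDiff ℝ (⊤ : ℕ∞) ψ) :
    ContDiff ℝ (⊤ : ℕ∞) (GG ρ ψ) :=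
  (((contDiff_pd hψ _).mul (((contDiff_pd hρ _).mul (contDiff_pd hρ _)).sub
    ((contDiff_pd hρ _).mul (contDiff_pd hρ _)))).div_const 2).add
    ((contDiff_pd hψ _).mul ((contDiff_pd hρ _).mul (contDiff_pd hρ _)))

lemma FF_per {ρ ψ : ℝ × ℝ → ℝ} (hρ : ContDiff ℝ (⊤ : ℕ∞) ρ) (hψ : ContDiff ℝ (⊤ : ℕ∞) ψ)
    (hρp : Per ρ) (hψp : Per ψ) : Per (FF ρ ψ) := by
  have e1 := per_pd hρ hρp ((1:ℝ), (0:ℝ))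
  have e2 := per_pd hρ hρp ((0:ℝ), (1:ℝ))
  have e3 := per_pd hψ hψp ((1:ℝ), (0:ℝ))
  have e4 := per_pd hψ hψp ((0:ℝ), (1:ℝ))
  constructor
  · intro x z
    simp only [FF, px, pz, e1.1 x z, e2.1 x z, e3.1 x z, e4.1 x z]
  · intro x z
    simp only [FF, px, pz, e1.2 x z, e2.2 x z, e3.2 x z, e4.2 x z]

lemma GG_per {ρ ψ : ℝ × ℝ → ℝ} (hρ : ContDiff ℝ (⊤ : ℕ∞) ρ) (hψ : ContDiff ℝ (⊤ : ℕ∞) ψ)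
    (hρp : Per ρ) (hψp : Per ψ) : Per (GG ρ ψ) := by
  have e1 := per_pd hρ hρp ((1:ℝ), (0:ℝ))
  have e2 := per_pd hρ hρp ((0:ℝ), (1:ℝ))
  have e3 := per_pd hψ hψp ((1:ℝ), (0:ℝ))
  have e4 := per_pd hψ hψp ((0:ℝ), (1:ℝ))
  constructor
  · intro x z
    simp only [GG, px, pz, e1.1 x z, e2.1 x z, e3.1 x z, e4.1 x z]
  · intro x z
    simp only [GG, px, pz, e1.2 x z, e2.2 x z, e3.2 x z, e4.2 x z]

lemma divergence_identity (ρ ψ : ℝ × ℝ → ℝ)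
    (hρ : ContDiff ℝ (⊤ : ℕ∞) ρ) (hψ : ContDiff ℝ (⊤ : ℕ∞) ψ) (p : ℝ × ℝ) :
    px (FF ρ ψ) p + pz (GG ρ ψ) p
    = Jac ρ ψ p * lap ρ p - px ρ p * pz ρ p * (px (px ψ) p - pz (pz ψ) p)
      + ((px ρ p) ^ 2 - (pz ρ p) ^ 2) * px (pz ψ) p := by
  have Dρx : Differentiable ℝ (fun q => fderiv ℝ ρ q (1, 0)) :=
    (contDiff_pd hρ _).differentiable (by simp)
  have Dρz : Differentiable ℝ (fun q => fderiv ℝ ρ q (0, 1)) :=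
    (contDiff_pd hρ _).differentiable (by simp)
  have Dψx : Differentiable ℝ (fun q => fderiv ℝ ψ q (1, 0)) :=
    (contDiff_pd hψ _).differentiable (by simp)
  have Dψz : Differentiable ℝ (fun q => fderiv ℝ ψ q (0, 1)) :=
    (contDiff_pd hψ _).differentiable (by simp)
  have DW : Differentiable ℝ (fun q => fderiv ℝ ρ q (1, 0) * fderiv ℝ ρ q (1, 0)
      - fderiv ℝ ρ q (0, 1) * fderiv ℝ ρ q (0, 1)) := (Dρx.mul Dρx).sub (Dρz.mul Dρz)
  have Dab : Differentiable ℝ (fun q => fderiv ℝ ρ q (1, 0) * fderiv ℝ ρ q (0, 1)) :=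
    Dρx.mul Dρz
  have DF1 : Differentiable ℝ (fun q => fderiv ℝ ψ q (0, 1) * (fderiv ℝ ρ q (1, 0) * fderiv ℝ ρ q (1, 0) - fderiv ℝ ρ q (0, 1) * fderiv ℝ ρ q (0, 1)) / 2) := by
    simp only [div_eq_mul_inv]; exact (Dψz.mul DW).mul_const _
  have DG1 : Differentiable ℝ (fun q => fderiv ℝ ψ q (1, 0) * (fderiv ℝ ρ q (1, 0) * fderiv ℝ ρ q (1, 0) - fderiv ℝ ρ q (0, 1) * fderiv ℝ ρ q (0, 1)) / 2) := by
    simp only [div_eq_mul_inv]; exact (Dψx.mul DW).mul_const _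
  unfold FF GG Jac lap px pz
  rw [pd_sub (DF1 p) ((Dψx.fun_mul Dab) p),
      pd_add (DG1 p) ((Dψz.fun_mul Dab) p),
      pd_div_const ((Dψz.fun_mul DW) p), pd_div_const ((Dψx.fun_mul DW) p),
      pd_mul (Dψz p) (DW p), pd_mul (Dψx p) (DW p),
      pd_mul (Dψx p) (Dab p), pd_mul (Dψz p) (Dab p),
      pd_sub ((Dρx.fun_mul Dρx) p) ((Dρz.fun_mul Dρz) p) (1, 0),
      pd_sub ((Dρx.fun_mul Dρx) p) ((Dρz.fun_mul Dρz) p) (0, 1),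
      pd_mul (Dρx p) (Dρz p) (1, 0), pd_mul (Dρx p) (Dρz p) (0, 1),
      pd_mul (Dρx p) (Dρx p) (1, 0), pd_mul (Dρx p) (Dρx p) (0, 1),
      pd_mul (Dρz p) (Dρz p) (1, 0), pd_mul (Dρz p) (Dρz p) (0, 1),
      pd_comm hρ (1, 0) (0, 1) p, pd_comm hψ (1, 0) (0, 1) p]
  ring

/-- For smooth 1-periodic `ρ, ψ`,
`∫_D J(ρ,ψ) Δρ = ∫_D ρ_x ρ_z (ψ_xx − ψ_zz) − ∫_D (ρ_x² − ρ_z²) ψ_xz`. -/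
theorem jacobian_laplacian_identity
    (ρ ψ : ℝ × ℝ → ℝ)
    (hρ : ContDiff ℝ (⊤ : ℕ∞) ρ) (hψ : ContDiff ℝ (⊤ : ℕ∞) ψ)
    (hρp : Per ρ) (hψp : Per ψ) :
    (∫ p in unitSq, Jac ρ ψ p * lap ρ p) =
      (∫ p in unitSq, px ρ p * pz ρ p * (px (px ψ) p - pz (pz ψ) p)) -
        ∫ p in unitSq, ((px ρ p) ^ 2 - (pz ρ p) ^ 2) * px (pz ψ) p := by
  have hK : IsCompact unitSq := isCompact_Icc.prod isCompact_Icc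
  -- continuity of all the pieces
  have cρx : Continuous (px ρ) := (contDiff_pd hρ _).continuous
  have cρz : Continuous (pz ρ) := (contDiff_pd hρ _).continuous
  have cψxx : Continuous (px (px ψ)) := (contDiff_pd (contDiff_pd hψ _) _).continuous
  have cψzz : Continuous (pz (pz ψ)) := (contDiff_pd (contDiff_pd hψ _) _).continuous
  have cψxz : Continuous (px (pz ψ)) := (contDiff_pd (contDiff_pd hψ _) _).continuous
  have hA : IntegrableOn (fun p => px ρ p * pz ρ p * (px (px ψ) p - pz (pz ψ) p))
      unitSq volume :=
    (((cρx.mul cρz).mul (cψxx.sub cψzz)).continuousOn).integrableOn_compact hK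
  have hB : IntegrableOn (fun p => ((px ρ p) ^ 2 - (pz ρ p) ^ 2) * px (pz ψ) p)
      unitSq volume :=
    ((((cρx.pow 2).sub (cρz.pow 2)).mul cψxz).continuousOn).integrableOn_compact hK
  have hF : IntegrableOn (px (FF ρ ψ)) unitSq volume :=
    ((contDiff_pd (FF_contDiff hρ hψ) _).continuous.continuousOn).integrableOn_compact hK
  have hG : IntegrableOn (pz (GG ρ ψ)) unitSq volume :=
    ((contDiff_pd (GG_contDiff hρ hψ) _).continuous.continuousOn).integrableOn_compact hK
  have key : ∀ p : ℝ × ℝ, Jac ρ ψ p * lap ρ p =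
      (px ρ p * pz ρ p * (px (px ψ) p - pz (pz ψ) p)
        - ((px ρ p) ^ 2 - (pz ρ p) ^ 2) * px (pz ψ) p)
      + (px (FF ρ ψ) p + pz (GG ρ ψ) p) := by
    intro p
    have := divergence_identity ρ ψ hρ hψ p
    linarith [this]
  calc (∫ p in unitSq, Jac ρ ψ p * lap ρ p)
      = ∫ p in unitSq, ((px ρ p * pz ρ p * (px (px ψ) p - pz (pz ψ) p)
          - ((px ρ p) ^ 2 - (pz ρ p) ^ 2) * px (pz ψ) p)
          + (px (FF ρ ψ) p + pz (GG ρ ψ) p)) := by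
        exact integral_congr_ae (Filter.Eventually.of_forall (fun p => key p))
    _ = (∫ p in unitSq, (px ρ p * pz ρ p * (px (px ψ) p - pz (pz ψ) p)
          - ((px ρ p) ^ 2 - (pz ρ p) ^ 2) * px (pz ψ) p))
        + ∫ p in unitSq, (px (FF ρ ψ) p + pz (GG ρ ψ) p) := by
        exact integral_add (hA.sub hB) (hF.add hG)
    _ = ((∫ p in unitSq, px ρ p * pz ρ p * (px (px ψ) p - pz (pz ψ) p))
          - ∫ p in unitSq, ((px ρ p) ^ 2 - (pz ρ p) ^ 2) * px (pz ψ) p)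
        + ((∫ p in unitSq, px (FF ρ ψ) p) + ∫ p in unitSq, pz (GG ρ ψ) p) := by
        rw [integral_sub hA hB, integral_add hF hG]
    _ = (∫ p in unitSq, px ρ p * pz ρ p * (px (px ψ) p - pz (pz ψ) p)) -
        ∫ p in unitSq, ((px ρ p) ^ 2 - (pz ρ p) ^ 2) * px (pz ψ) p := by
        rw [integral_px_zero (FF_contDiff hρ hψ) (FF_per hρ hψ hρp hψp),
          integral_pz_zero (GG_contDiff hρ hψ) (GG_per hρ hψ hρp hψp)]
        ring
end

section
/- There exists a constant C > 0 such that for all smooth 1-periodic zero-mean functions u, v : ℝ² → ℝ, one has |∫_D J(v,u) Δv dx dz| ≤ C ‖Δu‖ ‖∇v‖ ‖Δv‖, where ‖Δu‖² = ∫_D (Δu)² and ‖∇v‖² = ∫_D (v_x² + v_z²). -/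
open MeasureTheory Real

section A
variable {f g : ℝ × ℝ → ℝ}

lemma contDiff_px (hf : ContDiff ℝ (⊤ : ℕ∞) f) : ContDiff ℝ (⊤ : ℕ∞) (px f) :=
  (hf.fderiv_right (m := (⊤ : ℕ∞)) le_rfl).clm_apply contDiff_const

lemma contDiff_pz (hf : ContDiff ℝ (⊤ : ℕ∞) f) : ContDiff ℝ (⊤ : ℕ∞) (pz f) :=
  (hf.fderiv_right (m := (⊤ : ℕ∞)) le_rfl).clm_apply contDiff_const

lemma cont_px (hf : ContDiff ℝ (⊤ : ℕ∞) f) : Continuous (px f) := (contDiff_px hf).continuous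
lemma cont_pz (hf : ContDiff ℝ (⊤ : ℕ∞) f) : Continuous (pz f) := (contDiff_pz hf).continuous

lemma clairaut (hf : ContDiff ℝ (⊤ : ℕ∞) f) (p : ℝ × ℝ) : px (pz f) p = pz (px f) p := by
  have hd : DifferentiableAt ℝ (fderiv ℝ f) p :=
    ((hf.fderiv_right (m := (⊤ : ℕ∞)) le_rfl).differentiable (by simp)) p
  have hsymm : IsSymmSndFDerivAt ℝ f p := by
    apply (hf.contDiffAt).isSymmSndFDerivAt
    rw [minSmoothness_of_isRCLikeNormedField]
    exact WithTop.coe_le_coe.mpr (le_top : (2:ℕ∞) ≤ ⊤)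
  have h1 : px (pz f) p = fderiv ℝ (fderiv ℝ f) p (1,0) (0,1) := by
    show fderiv ℝ (fun q => (fderiv ℝ f q) (0,1)) p (1,0) = _
    rw [fderiv_clm_apply hd (differentiableAt_const _)]
    simp
  have h2 : pz (px f) p = fderiv ℝ (fderiv ℝ f) p (0,1) (1,0) := by
    show fderiv ℝ (fun q => (fderiv ℝ f q) (1,0)) p (0,1) = _
    rw [fderiv_clm_apply hd (differentiableAt_const _)]
    simp
  rw [h1, h2, hsymm]

lemma px_mul (hf : ContDiff ℝ (⊤ : ℕ∞) f) (hg : ContDiff ℝ (⊤ : ℕ∞) g) (p : ℝ × ℝ) :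
    px (fun q => f q * g q) p = px f p * g p + f p * px g p := by
  show fderiv ℝ (fun q => f q * g q) p (1,0) = _
  rw [fderiv_fun_mul (hf.differentiable (by simp) p) (hg.differentiable (by simp) p)]
  simp [px]; ring

lemma pz_mul (hf : ContDiff ℝ (⊤ : ℕ∞) f) (hg : ContDiff ℝ (⊤ : ℕ∞) g) (p : ℝ × ℝ) :
    pz (fun q => f q * g q) p = pz f p * g p + f p * pz g p := by
  show fderiv ℝ (fun q => f q * g q) p (0,1) = _
  rw [fderiv_fun_mul (hf.differentiable (by simp) p) (hg.differentiable (by simp) p)]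
  simp [pz]; ring

lemma px_add (hf : ContDiff ℝ (⊤ : ℕ∞) f) (hg : ContDiff ℝ (⊤ : ℕ∞) g) (p : ℝ × ℝ) :
    px (fun q => f q + g q) p = px f p + px g p := by
  show fderiv ℝ (fun q => f q + g q) p (1,0) = _
  rw [fderiv_fun_add (hf.differentiable (by simp) p) (hg.differentiable (by simp) p)]; rfl

lemma px_sub (hf : ContDiff ℝ (⊤ : ℕ∞) f) (hg : ContDiff ℝ (⊤ : ℕ∞) g) (p : ℝ × ℝ) :
    px (fun q => f q - g q) p = px f p - px g p := by
  show fderiv ℝ (fun q => f q - g q) p (1,0) = _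
  rw [fderiv_fun_sub (hf.differentiable (by simp) p) (hg.differentiable (by simp) p)]; rfl

lemma pz_add (hf : ContDiff ℝ (⊤ : ℕ∞) f) (hg : ContDiff ℝ (⊤ : ℕ∞) g) (p : ℝ × ℝ) :
    pz (fun q => f q + g q) p = pz f p + pz g p := by
  show fderiv ℝ (fun q => f q + g q) p (0,1) = _
  rw [fderiv_fun_add (hf.differentiable (by simp) p) (hg.differentiable (by simp) p)]; rfl

lemma pz_sub (hf : ContDiff ℝ (⊤ : ℕ∞) f) (hg : ContDiff ℝ (⊤ : ℕ∞) g) (p : ℝ × ℝ) :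
    pz (fun q => f q - g q) p = pz f p - pz g p := by
  show fderiv ℝ (fun q => f q - g q) p (0,1) = _
  rw [fderiv_fun_sub (hf.differentiable (by simp) p) (hg.differentiable (by simp) p)]; rfl

-- periodicity is inherited by partial derivatives
lemma fderiv_shift (hf : ContDiff ℝ (⊤ : ℕ∞) f) (p c : ℝ × ℝ) :
    fderiv ℝ (fun q => f (q + c)) p = fderiv ℝ f (p + c) := by
  have h := ((hf.differentiable (by simp) (p + c)).hasFDerivAt.comp p
    ((hasFDerivAt_id p).add_const c))
  simpa [Function.comp_def] using h.fderiv


lemma per_shift (hf : Per f) : (∀ q : ℝ × ℝ, f (q + (1,0)) = f q) ∧ ∀ q : ℝ × ℝ, f (q + (0,1)) = f q := by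
  constructor <;> rintro ⟨a, b⟩
  · simpa using hf.1 a b
  · simpa using hf.2 a b

lemma per_px (hs : ContDiff ℝ (⊤ : ℕ∞) f) (hf : Per f) : Per (px f) := by
  have e1 : f = fun q : ℝ × ℝ => f (q + (1,0)) := by funext q; exact ((per_shift hf).1 q).symm
  have e2 : f = fun q : ℝ × ℝ => f (q + (0,1)) := by funext q; exact ((per_shift hf).2 q).symm
  constructor <;> intro x z
  · show fderiv ℝ f (x+1, z) (1,0) = fderiv ℝ f (x, z) (1,0)
    conv_rhs => rw [e1]
    rw [fderiv_shift hs]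
    norm_num
  · show fderiv ℝ f (x, z+1) (1,0) = fderiv ℝ f (x, z) (1,0)
    conv_rhs => rw [e2]
    rw [fderiv_shift hs]
    norm_num

lemma per_pz (hs : ContDiff ℝ (⊤ : ℕ∞) f) (hf : Per f) : Per (pz f) := by
  have e1 : f = fun q : ℝ × ℝ => f (q + (1,0)) := by funext q; exact ((per_shift hf).1 q).symm
  have e2 : f = fun q : ℝ × ℝ => f (q + (0,1)) := by funext q; exact ((per_shift hf).2 q).symm
  constructor <;> intro x z
  · show fderiv ℝ f (x+1, z) (0,1) = fderiv ℝ f (x, z) (0,1)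
    conv_rhs => rw [e1]
    rw [fderiv_shift hs]
    norm_num
  · show fderiv ℝ f (x, z+1) (0,1) = fderiv ℝ f (x, z) (0,1)
    conv_rhs => rw [e2]
    rw [fderiv_shift hs]
    norm_num

-- 1D sections
lemma hasDerivAt_sec_x (hf : ContDiff ℝ (⊤ : ℕ∞) f) (x z : ℝ) :
    HasDerivAt (fun t => f (t, z)) (px f (x, z)) x := by
  have h1 : HasDerivAt (fun t : ℝ => (t, z) : ℝ → ℝ × ℝ) (1, 0) x :=
    HasDerivAt.prodMk (hasDerivAt_id x) (hasDerivAt_const x z)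
  have h2 := (hf.differentiable (by simp) (x, z)).hasFDerivAt
  have h3 := h2.comp_hasDerivAt x h1
  simp only [Function.comp_def] at h3
  exact h3

lemma hasDerivAt_sec_z (hf : ContDiff ℝ (⊤ : ℕ∞) f) (x z : ℝ) :
    HasDerivAt (fun t => f (x, t)) (pz f (x, z)) z := by
  have h1 : HasDerivAt (fun t : ℝ => (x, t) : ℝ → ℝ × ℝ) (0, 1) z :=
    HasDerivAt.prodMk (hasDerivAt_const z x) (hasDerivAt_id z)
  have h2 := (hf.differentiable (by simp) (x, z)).hasFDerivAt
  have h3 := h2.comp_hasDerivAt z h1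
  simp only [Function.comp_def] at h3
  exact h3

end A

section B
variable {f g : ℝ × ℝ → ℝ}

lemma unitSq_eq : unitSq = (Set.Icc (0:ℝ) 1) ×ˢ (Set.Icc (0:ℝ) 1) := rfl

lemma isCompact_unitSq : IsCompact unitSq := isCompact_Icc.prod isCompact_Icc

lemma integrableOn_sq (hf : Continuous f) : IntegrableOn f unitSq :=
  hf.continuousOn.integrableOn_compact isCompact_unitSq

lemma icc_eq_ii (h : ℝ → ℝ) : ∫ t in Set.Icc (0:ℝ) 1, h t = ∫ t in (0:ℝ)..1, h t := by
  rw [intervalIntegral.integral_of_le (by norm_num : (0:ℝ) ≤ 1), integral_Icc_eq_integral_Ioc]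

lemma I_eq (hf : Continuous f) :
    ∫ p in unitSq, f p = ∫ x in (0:ℝ)..1, ∫ z in (0:ℝ)..1, f (x, z) := by
  have hint : IntegrableOn f unitSq := integrableOn_sq hf
  rw [show (volume : Measure (ℝ × ℝ)) = (volume : Measure ℝ).prod volume from
    Measure.volume_eq_prod ℝ ℝ] at hint ⊢
  rw [unitSq_eq, setIntegral_prod _ hint]
  rw [← icc_eq_ii]
  refine setIntegral_congr_fun measurableSet_Icc (fun x _ => ?_)
  exact icc_eq_ii _

lemma I_eq' (hf : Continuous f) :
    ∫ p in unitSq, f p = ∫ z in (0:ℝ)..1, ∫ x in (0:ℝ)..1, f (x, z) := by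
  have hint : IntegrableOn f unitSq := integrableOn_sq hf
  rw [show (volume : Measure (ℝ × ℝ)) = (volume : Measure ℝ).prod volume from
    Measure.volume_eq_prod ℝ ℝ] at hint ⊢
  rw [unitSq_eq] at hint ⊢
  have hint2 : Integrable f
      (((volume : Measure ℝ).restrict (Set.Icc 0 1)).prod
        ((volume : Measure ℝ).restrict (Set.Icc 0 1))) := by
    rw [Measure.prod_restrict]; exact hint
  calc ∫ p in Set.Icc (0:ℝ) 1 ×ˢ Set.Icc (0:ℝ) 1, f p ∂(volume.prod volume)
      = ∫ p, f p ∂(((volume : Measure ℝ).restrict (Set.Icc 0 1)).prod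
          ((volume : Measure ℝ).restrict (Set.Icc 0 1))) := by
        rw [Measure.prod_restrict]
    _ = ∫ z, ∫ x, f (x, z) ∂((volume : Measure ℝ).restrict (Set.Icc 0 1))
          ∂((volume : Measure ℝ).restrict (Set.Icc 0 1)) := integral_prod_symm f hint2
    _ = ∫ z in (0:ℝ)..1, ∫ x in (0:ℝ)..1, f (x, z) := by
        rw [← icc_eq_ii]
        refine setIntegral_congr_fun measurableSet_Icc (fun z _ => ?_)
        exact icc_eq_ii _
end B

section B2
variable {f g : ℝ × ℝ → ℝ}

lemma intx_px (hs : ContDiff ℝ (⊤ : ℕ∞) f) (hper : Per f) (z : ℝ) :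
    ∫ x in (0:ℝ)..1, px f (x, z) = 0 := by
  have hcont : Continuous fun t : ℝ => px f (t, z) :=
    (cont_px hs).comp (continuous_id.prodMk continuous_const)
  rw [intervalIntegral.integral_eq_sub_of_hasDerivAt
    (fun x _ => hasDerivAt_sec_x hs x z) (hcont.intervalIntegrable _ _)]
  have := hper.1 0 z
  norm_num at this
  rw [this, sub_self]

lemma intz_pz (hs : ContDiff ℝ (⊤ : ℕ∞) f) (hper : Per f) (x : ℝ) :
    ∫ z in (0:ℝ)..1, pz f (x, z) = 0 := by
  have hcont : Continuous fun t : ℝ => pz f (x, t) :=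
    (cont_pz hs).comp (continuous_const.prodMk continuous_id)
  rw [intervalIntegral.integral_eq_sub_of_hasDerivAt
    (fun t _ => hasDerivAt_sec_z hs x t) (hcont.intervalIntegrable _ _)]
  have := hper.2 x 0
  norm_num at this
  rw [this, sub_self]

lemma I_px_zero (hs : ContDiff ℝ (⊤ : ℕ∞) f) (hper : Per f) :
    ∫ p in unitSq, px f p = 0 := by
  rw [I_eq' (cont_px hs)]
  simp [intx_px hs hper]

lemma I_pz_zero (hs : ContDiff ℝ (⊤ : ℕ∞) f) (hper : Per f) :
    ∫ p in unitSq, pz f p = 0 := by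
  rw [I_eq (cont_pz hs)]
  simp [intz_pz hs hper]

lemma Per.mul (hf : Per f) (hg : Per g) : Per (fun p => f p * g p) :=
  ⟨fun x z => by simp only [hf.1, hg.1], fun x z => by simp only [hf.2, hg.2]⟩

lemma IBP_x (hf : ContDiff ℝ (⊤ : ℕ∞) f) (hg : ContDiff ℝ (⊤ : ℕ∞) g) (pf : Per f) (pg : Per g) :
    ∫ p in unitSq, px f p * g p = - ∫ p in unitSq, f p * px g p := by
  have h0 : ∫ p in unitSq, px (fun q => f q * g q) p = 0 :=
    I_px_zero (hf.mul hg) (pf.mul pg)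
  have he : ∀ p, px (fun q => f q * g q) p = px f p * g p + f p * px g p := px_mul hf hg
  rw [show (fun p => px (fun q => f q * g q) p) = fun p => px f p * g p + f p * px g p
    from funext he] at h0
  have i1 : IntegrableOn (fun p => px f p * g p) unitSq :=
    integrableOn_sq ((cont_px hf).mul hg.continuous)
  have i2 : IntegrableOn (fun p => f p * px g p) unitSq :=
    integrableOn_sq (hf.continuous.mul (cont_px hg))
  rw [integral_add i1 i2] at h0
  linarith

lemma IBP_z (hf : ContDiff ℝ (⊤ : ℕ∞) f) (hg : ContDiff ℝ (⊤ : ℕ∞) g) (pf : Per f) (pg : Per g) :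
    ∫ p in unitSq, pz f p * g p = - ∫ p in unitSq, f p * pz g p := by
  have h0 : ∫ p in unitSq, pz (fun q => f q * g q) p = 0 :=
    I_pz_zero (hf.mul hg) (pf.mul pg)
  have he : ∀ p, pz (fun q => f q * g q) p = pz f p * g p + f p * pz g p := pz_mul hf hg
  rw [show (fun p => pz (fun q => f q * g q) p) = fun p => pz f p * g p + f p * pz g p
    from funext he] at h0
  have i1 : IntegrableOn (fun p => pz f p * g p) unitSq :=
    integrableOn_sq ((cont_pz hf).mul hg.continuous)
  have i2 : IntegrableOn (fun p => f p * pz g p) unitSq :=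
    integrableOn_sq (hf.continuous.mul (cont_pz hg))
  rw [integral_add i1 i2] at h0
  linarith

end B2

section C
variable {f g : ℝ × ℝ → ℝ}

lemma sq_integral_nonneg (f : ℝ × ℝ → ℝ) : 0 ≤ ∫ p in unitSq, f p ^ 2 :=
  setIntegral_nonneg (isCompact_unitSq.isClosed.measurableSet) (fun p _ => sq_nonneg _)

lemma CS (hf : Continuous f) (hg : Continuous g) :
    |∫ p in unitSq, f p * g p| ≤
      Real.sqrt (∫ p in unitSq, f p ^ 2) * Real.sqrt (∫ p in unitSq, g p ^ 2) := by
  set a := ∫ p in unitSq, f p ^ 2 with ha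
  set b := ∫ p in unitSq, f p * g p with hb
  set c := ∫ p in unitSq, g p ^ 2 with hc
  have ha0 : 0 ≤ a := sq_integral_nonneg f
  have hc0 : 0 ≤ c := sq_integral_nonneg g
  have key : ∀ t : ℝ, 0 ≤ a * (t * t) + (2 * b) * t + c := by
    intro t
    have h1 : 0 ≤ ∫ p in unitSq, (t * f p + g p) ^ 2 :=
      setIntegral_nonneg (isCompact_unitSq.isClosed.measurableSet) (fun p _ => sq_nonneg _)
    have h2 : ∀ p : ℝ × ℝ, (t * f p + g p) ^ 2
        = (t * t) * f p ^ 2 + (2 * t) * (f p * g p) + g p ^ 2 := by intro p; ring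
    rw [show (fun p => (t * f p + g p)^2)
        = fun p => (t * t) * f p ^ 2 + (2 * t) * (f p * g p) + g p ^ 2 from funext h2] at h1
    have i1 : IntegrableOn (fun p => (t*t) * f p ^ 2) unitSq :=
      integrableOn_sq (continuous_const.mul (hf.pow 2))
    have i2 : IntegrableOn (fun p => (2*t) * (f p * g p)) unitSq :=
      integrableOn_sq (continuous_const.mul (hf.mul hg))
    have i3 : IntegrableOn (fun p => g p ^ 2) unitSq := integrableOn_sq (hg.pow 2)
    have e1 : ∫ p in unitSq, ((t*t) * f p ^ 2 + (2*t) * (f p * g p) + g p ^ 2)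
        = (∫ p in unitSq, (t*t) * f p ^ 2) + (∫ p in unitSq, (2*t) * (f p * g p))
          + ∫ p in unitSq, g p ^ 2 := by
      have i12 : IntegrableOn (fun p => (t*t) * f p ^ 2 + (2*t) * (f p * g p)) unitSq :=
        i1.add i2
      rw [integral_add i12 i3, integral_add i1 i2]
    rw [e1, integral_const_mul, integral_const_mul] at h1
    nlinarith [h1]
  have hd := discrim_le_zero key
  rw [discrim] at hd
  have hb2 : b ^ 2 ≤ a * c := by nlinarith [hd]
  calc |b| = Real.sqrt (b ^ 2) := (Real.sqrt_sq_eq_abs b).symm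
    _ ≤ Real.sqrt (a * c) := Real.sqrt_le_sqrt hb2
    _ = Real.sqrt a * Real.sqrt c := Real.sqrt_mul ha0 _

end C

section D1
-- 1D helper lemmas on [0,1]

lemma diff_bound {h h' : ℝ → ℝ} (hd : ∀ x, HasDerivAt h (h' x) x) (hc' : Continuous h')
    {s x : ℝ} (hs : s ∈ Set.Icc (0:ℝ) 1) (hx : x ∈ Set.Icc (0:ℝ) 1) :
    |h x - h s| ≤ ∫ t in (0:ℝ)..1, |h' t| := by
  have key : ∀ a b : ℝ, a ∈ Set.Icc (0:ℝ) 1 → b ∈ Set.Icc (0:ℝ) 1 → a ≤ b →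
      |h b - h a| ≤ ∫ t in (0:ℝ)..1, |h' t| := by
    intro a b ha hb hab
    rw [← intervalIntegral.integral_eq_sub_of_hasDerivAt (fun t _ => hd t)
      (hc'.intervalIntegrable _ _)]
    calc |∫ t in a..b, h' t| ≤ ∫ t in a..b, |h' t| :=
          intervalIntegral.abs_integral_le_integral_abs hab
      _ ≤ ∫ t in (0:ℝ)..1, |h' t| := by
          apply intervalIntegral.integral_mono_interval ha.1 hab hb.2
          · exact Filter.Eventually.of_forall fun t => abs_nonneg _
          · exact (hc'.abs.intervalIntegrable _ _)
  rcases le_total s x with hle | hle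
  · exact key s x hs hx hle
  · rw [abs_sub_comm]; exact key x s hx hs hle

lemma avg_bound {h : ℝ → ℝ} (hc : Continuous h) {M x : ℝ} (hx : x ∈ Set.Icc (0:ℝ) 1)
    (hM : ∀ s ∈ Set.Icc (0:ℝ) 1, |h x - h s| ≤ M) :
    h x ≤ (∫ t in (0:ℝ)..1, h t) + M := by
  have h1 : h x - ∫ t in (0:ℝ)..1, h t = ∫ s in (0:ℝ)..1, (h x - h s) := by
    rw [intervalIntegral.integral_sub (intervalIntegrable_const) (hc.intervalIntegrable _ _)]
    simp
  have h2 : ∫ s in (0:ℝ)..1, (h x - h s) ≤ ∫ s in (0:ℝ)..1, M := by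
    apply intervalIntegral.integral_mono_on (by norm_num)
      ((continuous_const.sub hc).intervalIntegrable _ _) intervalIntegrable_const
    intro s hs; exact (le_abs_self _).trans (hM s hs)
  have h3 : ∫ s in (0:ℝ)..1, (M:ℝ) = M := by simp
  linarith [h1 ▸ h2.trans_eq h3]

lemma CS1 {h k : ℝ → ℝ} (hh : Continuous h) (hk : Continuous k) :
    |∫ t in (0:ℝ)..1, h t * k t| ≤
      Real.sqrt (∫ t in (0:ℝ)..1, h t ^ 2) * Real.sqrt (∫ t in (0:ℝ)..1, k t ^ 2) := by
  set a := ∫ t in (0:ℝ)..1, h t ^ 2 with ha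
  set b := ∫ t in (0:ℝ)..1, h t * k t with hb
  set c := ∫ t in (0:ℝ)..1, k t ^ 2 with hc
  have ha0 : 0 ≤ a := intervalIntegral.integral_nonneg (by norm_num) (fun t _ => sq_nonneg _)
  have hc0 : 0 ≤ c := intervalIntegral.integral_nonneg (by norm_num) (fun t _ => sq_nonneg _)
  have key : ∀ t : ℝ, 0 ≤ a * (t * t) + (2 * b) * t + c := by
    intro t
    have h1 : 0 ≤ ∫ s in (0:ℝ)..1, (t * h s + k s) ^ 2 :=
      intervalIntegral.integral_nonneg (by norm_num) (fun s _ => sq_nonneg _)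
    have e1 : ∫ s in (0:ℝ)..1, (t * h s + k s) ^ 2
        = (t*t) * a + (2*t) * b + c := by
      rw [show (fun s => (t * h s + k s)^2)
          = fun s => ((t*t) * h s ^ 2 + (2*t) * (h s * k s)) + k s ^ 2 from
        funext fun s => by ring]
      rw [intervalIntegral.integral_add (f := fun s => t*t*h s^2 + 2*t*(h s*k s)) (g := fun s => k s ^ 2) (((continuous_const.mul (hh.pow 2)).add
          (continuous_const.mul (hh.mul hk))).intervalIntegrable _ _)
          ((hk.pow 2).intervalIntegrable _ _),
        intervalIntegral.integral_add (f := fun s => t*t*h s^2) (g := fun s => 2*t*(h s*k s)) ((continuous_const.mul (hh.pow 2)).intervalIntegrable _ _)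
          ((continuous_const.mul (hh.mul hk)).intervalIntegrable _ _),
        intervalIntegral.integral_const_mul, intervalIntegral.integral_const_mul]
    rw [e1] at h1; nlinarith [h1]
  have hd := discrim_le_zero key
  rw [discrim] at hd
  have hb2 : b ^ 2 ≤ a * c := by nlinarith [hd]
  calc |b| = Real.sqrt (b ^ 2) := (Real.sqrt_sq_eq_abs b).symm
    _ ≤ Real.sqrt (a * c) := Real.sqrt_le_sqrt hb2
    _ = Real.sqrt a * Real.sqrt c := Real.sqrt_mul ha0 _

lemma sq_avg_bound {h h' : ℝ → ℝ} (hd : ∀ x, HasDerivAt h (h' x) x) (hc' : Continuous h')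
    (hmean : ∫ t in (0:ℝ)..1, h t = 0) {x : ℝ} (hx : x ∈ Set.Icc (0:ℝ) 1) :
    h x ^ 2 ≤ ∫ t in (0:ℝ)..1, h' t ^ 2 := by
  have hc : Continuous h := by
    have : Differentiable ℝ h := fun x => (hd x).differentiableAt
    exact this.continuous
  have hub : h x ≤ ∫ t in (0:ℝ)..1, |h' t| := by
    have := avg_bound hc hx (M := ∫ t in (0:ℝ)..1, |h' t|)
      (fun s hs => diff_bound hd hc' hs hx)
    rwa [hmean, zero_add] at this
  have hlb : -(∫ t in (0:ℝ)..1, |h' t|) ≤ h x := by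
    have := avg_bound (hc.neg) (h := fun t => -h t) hx (M := ∫ t in (0:ℝ)..1, |h' t|)
      (fun s hs => by
        have hb := diff_bound hd hc' hs hx
        have : |-h x + h s| = |h x - h s| := by rw [← abs_neg]; ring_nf
        rw [show -h x - -h s = -h x + h s by ring, this]
        exact hb)
    simp only [intervalIntegral.integral_neg, hmean, neg_zero, zero_add] at this
    linarith
  have habs : |h x| ≤ ∫ t in (0:ℝ)..1, |h' t| := abs_le.2 ⟨hlb, hub⟩
  have hM2 : (∫ t in (0:ℝ)..1, |h' t|) ^ 2 ≤ ∫ t in (0:ℝ)..1, h' t ^ 2 := by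
    have := CS1 (hc'.abs) (continuous_const : Continuous fun _ : ℝ => (1:ℝ))
    simp only [mul_one] at this
    have e : ∫ t in (0:ℝ)..1, |h' t| ^ 2 = ∫ t in (0:ℝ)..1, h' t ^ 2 := by
      congr 1; funext t; exact sq_abs _
    have e2 : ∫ t in (0:ℝ)..1, (1:ℝ) ^ 2 = 1 := by norm_num
    rw [e, e2, Real.sqrt_one, mul_one] at this
    have h0 : 0 ≤ ∫ t in (0:ℝ)..1, |h' t| :=
      intervalIntegral.integral_nonneg (by norm_num) (fun t _ => abs_nonneg _)
    have := abs_of_nonneg h0 ▸ this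
    nlinarith [Real.sq_sqrt (intervalIntegral.integral_nonneg
      (by norm_num : (0:ℝ) ≤ 1) (fun t _ => sq_nonneg (h' t)) : (0:ℝ) ≤ ∫ t in (0:ℝ)..1, h' t ^ 2)]
  calc h x ^ 2 = |h x| ^ 2 := (sq_abs _).symm
    _ ≤ (∫ t in (0:ℝ)..1, |h' t|) ^ 2 := by
        have h0 : 0 ≤ |h x| := abs_nonneg _
        nlinarith
    _ ≤ _ := hM2

end D1

section D2
variable {v f : ℝ × ℝ → ℝ}

lemma contParam (hg : Continuous f) : Continuous fun z => ∫ x in (0:ℝ)..1, f (x, z) := by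
  apply intervalIntegral.continuous_parametric_intervalIntegral_of_continuous' (μ := volume)
    (f := fun z x => f (x, z)) ?_ 0 1
  exact hg.comp (continuous_snd.prodMk continuous_fst)

lemma contParam' (hg : Continuous f) : Continuous fun x => ∫ z in (0:ℝ)..1, f (x, z) := by
  apply intervalIntegral.continuous_parametric_intervalIntegral_of_continuous' (μ := volume)
    (f := fun x z => f (x, z)) ?_ 0 1
  exact hg.comp (continuous_fst.prodMk continuous_snd)

lemma poincare_x (hv : ContDiff ℝ (⊤ : ℕ∞) v) (pv : Per v) :
    ∫ p in unitSq, (px v p) ^ 2 ≤ ∫ p in unitSq, (px (px v) p) ^ 2 := by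
  rw [I_eq' (f := fun p => px v p ^ 2) ((cont_px hv).pow 2), I_eq' (f := fun p => px (px v) p ^ 2) ((cont_px (contDiff_px hv)).pow 2)]
  apply intervalIntegral.integral_mono_on (by norm_num)
    ((contParam ((cont_px hv).pow 2)).intervalIntegrable _ _)
    ((contParam ((cont_px (contDiff_px hv)).pow 2)).intervalIntegrable _ _)
  intro z _
  have hd : ∀ x, HasDerivAt (fun t => px v (t, z)) (px (px v) (x, z)) x :=
    fun x => hasDerivAt_sec_x (contDiff_px hv) x z
  have hc' : Continuous fun t : ℝ => px (px v) (t, z) :=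
    (cont_px (contDiff_px hv)).comp (continuous_id.prodMk continuous_const)
  have hmean : ∫ x in (0:ℝ)..1, px v (x, z) = 0 := intx_px hv pv z
  have hb : ∀ x ∈ Set.Icc (0:ℝ) 1,
      (px v (x, z)) ^ 2 ≤ ∫ t in (0:ℝ)..1, (px (px v) (t, z)) ^ 2 :=
    fun x hx => sq_avg_bound hd hc' hmean hx
  calc ∫ x in (0:ℝ)..1, (px v (x, z)) ^ 2
      ≤ ∫ x in (0:ℝ)..1, (∫ t in (0:ℝ)..1, (px (px v) (t, z)) ^ 2) := by
        apply intervalIntegral.integral_mono_on (by norm_num)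
          ((((cont_px hv).comp (continuous_id.prodMk continuous_const)).pow 2).intervalIntegrable _ _)
          intervalIntegrable_const hb
    _ = ∫ t in (0:ℝ)..1, (px (px v) (t, z)) ^ 2 := by simp

lemma poincare_z (hv : ContDiff ℝ (⊤ : ℕ∞) v) (pv : Per v) :
    ∫ p in unitSq, (pz v p) ^ 2 ≤ ∫ p in unitSq, (pz (pz v) p) ^ 2 := by
  rw [I_eq (f := fun p => pz v p ^ 2) ((cont_pz hv).pow 2), I_eq (f := fun p => pz (pz v) p ^ 2) ((cont_pz (contDiff_pz hv)).pow 2)]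
  apply intervalIntegral.integral_mono_on (by norm_num)
    ((contParam' ((cont_pz hv).pow 2)).intervalIntegrable _ _)
    ((contParam' ((cont_pz (contDiff_pz hv)).pow 2)).intervalIntegrable _ _)
  intro x _
  have hd : ∀ z, HasDerivAt (fun t => pz v (x, t)) (pz (pz v) (x, z)) z :=
    fun z => hasDerivAt_sec_z (contDiff_pz hv) x z
  have hc' : Continuous fun t : ℝ => pz (pz v) (x, t) :=
    (cont_pz (contDiff_pz hv)).comp (continuous_const.prodMk continuous_id)
  have hmean : ∫ z in (0:ℝ)..1, pz v (x, z) = 0 := intz_pz hv pv x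
  have hb : ∀ z ∈ Set.Icc (0:ℝ) 1,
      (pz v (x, z)) ^ 2 ≤ ∫ t in (0:ℝ)..1, (pz (pz v) (x, t)) ^ 2 :=
    fun z hz => sq_avg_bound hd hc' hmean hz
  calc ∫ z in (0:ℝ)..1, (pz v (x, z)) ^ 2
      ≤ ∫ z in (0:ℝ)..1, (∫ t in (0:ℝ)..1, (pz (pz v) (x, t)) ^ 2) := by
        apply intervalIntegral.integral_mono_on (by norm_num)
          ((((cont_pz hv).comp (continuous_const.prodMk continuous_id)).pow 2).intervalIntegrable _ _)
          intervalIntegrable_const hb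
    _ = ∫ t in (0:ℝ)..1, (pz (pz v) (x, t)) ^ 2 := by simp

end D2


section E
variable {f : ℝ × ℝ → ℝ}

lemma contSecX (hg : Continuous f) (z : ℝ) : Continuous fun x => f (x, z) :=
  hg.comp (continuous_id.prodMk continuous_const)

lemma contSecZ (hg : Continuous f) (x : ℝ) : Continuous fun z => f (x, z) :=
  hg.comp (continuous_const.prodMk continuous_id)

lemma Icongr {a b : ℝ × ℝ → ℝ} (h : ∀ p, a p = b p) :
    ∫ p in unitSq, a p = ∫ p in unitSq, b p := by
  have : a = b := funext h
  rw [this]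

lemma lady (hf : ContDiff ℝ (⊤ : ℕ∞) f) :
    ∫ p in unitSq, f p ^ 4 ≤
      ((∫ p in unitSq, f p ^ 2) + ∫ p in unitSq, |pz (fun q => f q * f q) p|) *
      ((∫ p in unitSq, f p ^ 2) + ∫ p in unitSq, |px (fun q => f q * f q) p|) := by
  set g : ℝ × ℝ → ℝ := fun q => f q * f q with hgdef
  have hg : ContDiff ℝ (⊤ : ℕ∞) g := hf.mul hf
  have hgc : Continuous g := hg.continuous
  have hgnn : ∀ p, 0 ≤ g p := fun p => mul_self_nonneg _
  have cpx : Continuous (px g) := cont_px hg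
  have cpz : Continuous (pz g) := cont_pz hg
  set A : ℝ → ℝ := fun z => ∫ x in (0:ℝ)..1, g (x, z) with hAdef
  set B : ℝ → ℝ := fun z => ∫ x in (0:ℝ)..1, |px g (x, z)| with hBdef
  have contA : Continuous A := contParam hgc
  have contB : Continuous B := contParam cpx.abs
  have hA0 : ∀ z, 0 ≤ A z :=
    fun z => intervalIntegral.integral_nonneg (by norm_num) (fun x _ => hgnn _)
  have hB0 : ∀ z, 0 ≤ B z :=
    fun z => intervalIntegral.integral_nonneg (by norm_num) (fun x _ => abs_nonneg _)
  have step1 : ∀ z ∈ Set.Icc (0:ℝ) 1, ∀ x ∈ Set.Icc (0:ℝ) 1, g (x, z) ≤ A z + B z := by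
    intro z _ x hx
    apply avg_bound (contSecX hgc z) hx
    intro s hs
    exact diff_bound (fun t => hasDerivAt_sec_x hg t z) (contSecX cpx z) hs hx
  have intA : (∫ t in (0:ℝ)..1, A t) = ∫ p in unitSq, g p := by
    simp only [hAdef]; exact (I_eq' hgc).symm
  have intB : (∫ t in (0:ℝ)..1, B t) = ∫ p in unitSq, |px g p| := by
    simp only [hBdef]; exact (I_eq' cpx.abs).symm
  have step2 : ∀ z ∈ Set.Icc (0:ℝ) 1,
      A z ≤ (∫ p in unitSq, g p) + ∫ p in unitSq, |pz g p| := by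
    intro z hz
    have hM : ∀ s ∈ Set.Icc (0:ℝ) 1, |A z - A s| ≤ ∫ p in unitSq, |pz g p| := by
      intro s hs
      have e1 : A z - A s = ∫ x in (0:ℝ)..1, (g (x, z) - g (x, s)) :=
        (intervalIntegral.integral_sub ((contSecX hgc z).intervalIntegrable _ _)
          ((contSecX hgc s).intervalIntegrable _ _)).symm
      have e2 : |∫ x in (0:ℝ)..1, (g (x, z) - g (x, s))|
          ≤ ∫ x in (0:ℝ)..1, |g (x, z) - g (x, s)| :=
        intervalIntegral.abs_integral_le_integral_abs (by norm_num)
      have e3 : ∫ x in (0:ℝ)..1, |g (x, z) - g (x, s)|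
          ≤ ∫ x in (0:ℝ)..1, (∫ t in (0:ℝ)..1, |pz g (x, t)|) := by
        apply intervalIntegral.integral_mono_on (by norm_num)
          (((contSecX hgc z).sub (contSecX hgc s)).abs.intervalIntegrable _ _)
          ((contParam' cpz.abs).intervalIntegrable _ _)
        intro x _
        exact diff_bound (fun t => hasDerivAt_sec_z hg x t) (contSecZ cpz x) hs hz
      rw [e1]
      refine e2.trans (e3.trans ?_)
      rw [← I_eq cpz.abs]
    have := avg_bound contA hz hM
    rwa [intA] at this
  have inner3 : ∀ z ∈ Set.Icc (0:ℝ) 1,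
      (∫ x in (0:ℝ)..1, g (x, z) ^ 2)
        ≤ ((∫ p in unitSq, g p) + ∫ p in unitSq, |pz g p|) * (A z + B z) := by
    intro z hz
    have h1 : ∫ x in (0:ℝ)..1, g (x, z) ^ 2
        ≤ ∫ x in (0:ℝ)..1, (A z + B z) * g (x, z) := by
      apply intervalIntegral.integral_mono_on (by norm_num)
        (((contSecX hgc z).pow 2).intervalIntegrable _ _)
        ((continuous_const.mul (contSecX hgc z)).intervalIntegrable _ _)
      intro x hx
      have := step1 z hz x hx
      show g (x, z) ^ 2 ≤ (A z + B z) * g (x, z)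
      nlinarith [hgnn (x, z)]
    have h2 : ∫ x in (0:ℝ)..1, (A z + B z) * g (x, z) = (A z + B z) * A z :=
      intervalIntegral.integral_const_mul _ _
    have h3 : (A z + B z) * A z
        ≤ (A z + B z) * ((∫ p in unitSq, g p) + ∫ p in unitSq, |pz g p|) :=
      mul_le_mul_of_nonneg_left (step2 z hz) (add_nonneg (hA0 z) (hB0 z))
    calc ∫ x in (0:ℝ)..1, g (x, z) ^ 2 ≤ (A z + B z) * A z := h1.trans_eq h2
      _ ≤ (A z + B z) * ((∫ p in unitSq, g p) + ∫ p in unitSq, |pz g p|) := h3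
      _ = ((∫ p in unitSq, g p) + ∫ p in unitSq, |pz g p|) * (A z + B z) := mul_comm _ _
  have main : ∫ p in unitSq, f p ^ 4
      ≤ ((∫ p in unitSq, g p) + ∫ p in unitSq, |pz g p|)
        * ((∫ p in unitSq, g p) + ∫ p in unitSq, |px g p|) := by
    have e0 : ∫ p in unitSq, f p ^ 4 = ∫ p in unitSq, g p ^ 2 :=
      Icongr (fun p => by simp only [hgdef]; ring)
    rw [e0, I_eq' (f := fun p => g p ^ 2) (hgc.pow 2)]
    have mono : ∫ z in (0:ℝ)..1, (∫ x in (0:ℝ)..1, g (x, z) ^ 2)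
        ≤ ∫ z in (0:ℝ)..1,
            ((∫ p in unitSq, g p) + ∫ p in unitSq, |pz g p|) * (A z + B z) := by
      apply intervalIntegral.integral_mono_on (by norm_num)
        ((contParam (hgc.pow 2)).intervalIntegrable _ _)
        ((continuous_const.mul (contA.add contB)).intervalIntegrable _ _)
      exact inner3
    refine mono.trans ?_
    rw [intervalIntegral.integral_const_mul,
      intervalIntegral.integral_add (contA.intervalIntegrable _ _) (contB.intervalIntegrable _ _),
      intA, intB]
  have eg : ∫ p in unitSq, g p = ∫ p in unitSq, f p ^ 2 :=
    Icongr (fun p => by simp only [hgdef]; ring)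
  rw [eg] at main
  exact main

end E

section F
variable {f u v : ℝ × ℝ → ℝ}

lemma bound_abs_px (hf : ContDiff ℝ (⊤ : ℕ∞) f) :
    ∫ p in unitSq, |px (fun q => f q * f q) p| ≤
      2 * Real.sqrt (∫ p in unitSq, f p ^ 2) * Real.sqrt (∫ p in unitSq, (px f p) ^ 2) := by
  have e1 : ∫ p in unitSq, |px (fun q => f q * f q) p|
      = ∫ p in unitSq, 2 * (|f p| * |px f p|) := by
    apply Icongr; intro p
    rw [px_mul hf hf]
    rw [show px f p * f p + f p * px f p = 2 * (f p * px f p) by ring]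
    rw [abs_mul, abs_mul]
    norm_num
  rw [e1]
  have e2 : ∫ p in unitSq, 2 * (|f p| * |px f p|) = 2 * ∫ p in unitSq, |f p| * |px f p| :=
    integral_const_mul 2 _
  rw [e2]
  have h3 : abs (∫ p in unitSq, |f p| * |px f p|) ≤
      Real.sqrt (∫ p in unitSq, |f p| ^ 2) * Real.sqrt (∫ p in unitSq, |px f p| ^ 2) :=
    CS hf.continuous.abs (cont_px hf).abs
  have h4 : ∫ p in unitSq, |f p| * |px f p| ≥ 0 :=
    setIntegral_nonneg isCompact_unitSq.isClosed.measurableSet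
      (fun p _ => mul_nonneg (abs_nonneg _) (abs_nonneg _))
  rw [abs_of_nonneg h4] at h3
  have e5 : ∫ p in unitSq, |f p| ^ 2 = ∫ p in unitSq, f p ^ 2 :=
    Icongr (fun p => sq_abs _)
  have e6 : ∫ p in unitSq, |px f p| ^ 2 = ∫ p in unitSq, (px f p) ^ 2 :=
    Icongr (fun p => sq_abs _)
  rw [e5, e6] at h3
  rw [mul_assoc]
  exact mul_le_mul_of_nonneg_left h3 (by norm_num)

lemma bound_abs_pz (hf : ContDiff ℝ (⊤ : ℕ∞) f) :
    ∫ p in unitSq, |pz (fun q => f q * f q) p| ≤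
      2 * Real.sqrt (∫ p in unitSq, f p ^ 2) * Real.sqrt (∫ p in unitSq, (pz f p) ^ 2) := by
  have e1 : ∫ p in unitSq, |pz (fun q => f q * f q) p|
      = ∫ p in unitSq, 2 * (|f p| * |pz f p|) := by
    apply Icongr; intro p
    rw [pz_mul hf hf]
    rw [show pz f p * f p + f p * pz f p = 2 * (f p * pz f p) by ring]
    rw [abs_mul, abs_mul]
    norm_num
  rw [e1]
  rw [integral_const_mul 2 _]
  have h3 : abs (∫ p in unitSq, |f p| * |pz f p|) ≤
      Real.sqrt (∫ p in unitSq, |f p| ^ 2) * Real.sqrt (∫ p in unitSq, |pz f p| ^ 2) :=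
    CS hf.continuous.abs (cont_pz hf).abs
  have h4 : ∫ p in unitSq, |f p| * |pz f p| ≥ 0 :=
    setIntegral_nonneg isCompact_unitSq.isClosed.measurableSet
      (fun p _ => mul_nonneg (abs_nonneg _) (abs_nonneg _))
  rw [abs_of_nonneg h4] at h3
  rw [Icongr (fun p => sq_abs (f p)), Icongr (fun p => sq_abs (pz f p))] at h3
  rw [mul_assoc]
  exact mul_le_mul_of_nonneg_left h3 (by norm_num)

-- cross-derivative identity : ∫ v_xx v_zz = ∫ v_xz²
lemma cross_identity (hv : ContDiff ℝ (⊤ : ℕ∞) v) (pv : Per v) :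
    ∫ p in unitSq, px (px v) p * pz (pz v) p
      = ∫ p in unitSq, (pz (px v) p) ^ 2 := by
  have h1 : ∫ p in unitSq, px (px v) p * pz (pz v) p
      = - ∫ p in unitSq, px v p * px (pz (pz v)) p :=
    IBP_x (contDiff_px hv) (contDiff_pz (contDiff_pz hv)) (per_px hv pv)
      (per_pz (contDiff_pz hv) (per_pz hv pv))
  have e1 : (fun p => px (pz (pz v)) p) = fun p => pz (pz (px v)) p := by
    funext p
    rw [clairaut (contDiff_pz hv) p]
    have : px (pz v) = pz (px v) := funext (clairaut hv)
    rw [this]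
  have h2 : ∫ p in unitSq, pz (px v) p * pz (px v) p
      = - ∫ p in unitSq, px v p * pz (pz (px v)) p :=
    IBP_z (contDiff_px hv) (contDiff_pz (contDiff_px hv)) (per_px hv pv)
      (per_pz (contDiff_px hv) (per_px hv pv))
  have e2 : ∫ p in unitSq, px v p * px (pz (pz v)) p
      = ∫ p in unitSq, px v p * pz (pz (px v)) p := by
    apply Icongr; intro p
    rw [show px (pz (pz v)) p = pz (pz (px v)) p from congrFun e1 p]
  rw [h1, e2, ← h2]
  exact Icongr (fun p => (pow_two (pz (px v) p)).symm)

end F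

section G
variable {v : ℝ × ℝ → ℝ}

lemma lap_decomp (hv : ContDiff ℝ (⊤ : ℕ∞) v) (pv : Per v) :
    ∫ p in unitSq, (lap v p) ^ 2
      = (∫ p in unitSq, (px (px v) p) ^ 2) + 2 * (∫ p in unitSq, (pz (px v) p) ^ 2)
        + ∫ p in unitSq, (pz (pz v) p) ^ 2 := by
  have c1 : Continuous (px (px v)) := cont_px (contDiff_px hv)
  have c2 : Continuous (pz (pz v)) := cont_pz (contDiff_pz hv)
  have e : ∀ p, (lap v p) ^ 2 = (px (px v) p) ^ 2
      + ((px (px v) p * pz (pz v) p + px (px v) p * pz (pz v) p) + (pz (pz v) p) ^ 2) := by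
    intro p; simp only [lap]; ring
  rw [Icongr e]
  have i1 : IntegrableOn (fun p => (px (px v) p) ^ 2) unitSq := integrableOn_sq (c1.pow 2)
  have i2 : IntegrableOn (fun p => px (px v) p * pz (pz v) p + px (px v) p * pz (pz v) p)
      unitSq := integrableOn_sq ((c1.mul c2).add (c1.mul c2))
  have i2' : IntegrableOn (fun p => px (px v) p * pz (pz v) p) unitSq :=
    integrableOn_sq (c1.mul c2)
  have i3 : IntegrableOn (fun p => (pz (pz v) p) ^ 2) unitSq := integrableOn_sq (c2.pow 2)
  have i23 : IntegrableOn (fun p => (px (px v) p * pz (pz v) p + px (px v) p * pz (pz v) p)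
      + (pz (pz v) p) ^ 2) unitSq := i2.add i3
  rw [integral_add i1 i23, integral_add i2 i3, integral_add i2' i2', cross_identity hv pv]
  ring

lemma vxx_le (hv : ContDiff ℝ (⊤ : ℕ∞) v) (pv : Per v) :
    ∫ p in unitSq, (px (px v) p) ^ 2 ≤ ∫ p in unitSq, (lap v p) ^ 2 := by
  have := lap_decomp hv pv
  nlinarith [sq_integral_nonneg (pz (px v)), sq_integral_nonneg (pz (pz v))]

lemma vzz_le (hv : ContDiff ℝ (⊤ : ℕ∞) v) (pv : Per v) :
    ∫ p in unitSq, (pz (pz v) p) ^ 2 ≤ ∫ p in unitSq, (lap v p) ^ 2 := by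
  have := lap_decomp hv pv
  nlinarith [sq_integral_nonneg (pz (px v)), sq_integral_nonneg (px (px v))]

lemma vxz_le (hv : ContDiff ℝ (⊤ : ℕ∞) v) (pv : Per v) :
    ∫ p in unitSq, (pz (px v) p) ^ 2 ≤ ∫ p in unitSq, (lap v p) ^ 2 := by
  have := lap_decomp hv pv
  nlinarith [sq_integral_nonneg (pz (px v)), sq_integral_nonneg (px (px v)),
    sq_integral_nonneg (pz (pz v))]

lemma vxz_le' (hv : ContDiff ℝ (⊤ : ℕ∞) v) (pv : Per v) :
    ∫ p in unitSq, (px (pz v) p) ^ 2 ≤ ∫ p in unitSq, (lap v p) ^ 2 := by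
  have e : ∫ p in unitSq, (px (pz v) p) ^ 2 = ∫ p in unitSq, (pz (px v) p) ^ 2 :=
    Icongr (fun p => by rw [clairaut hv p])
  rw [e]; exact vxz_le hv pv

end G

section H
variable {u v : ℝ × ℝ → ℝ}

lemma Per.add {f g : ℝ × ℝ → ℝ} (hf : Per f) (hg : Per g) : Per (fun p => f p + g p) :=
  ⟨fun x z => by simp only [hf.1, hg.1], fun x z => by simp only [hf.2, hg.2]⟩

lemma Per.sub {f g : ℝ × ℝ → ℝ} (hf : Per f) (hg : Per g) : Per (fun p => f p - g p) :=
  ⟨fun x z => by simp only [hf.1, hg.1], fun x z => by simp only [hf.2, hg.2]⟩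

lemma main_identity (hu : ContDiff ℝ (⊤ : ℕ∞) u) (hv : ContDiff ℝ (⊤ : ℕ∞) v)
    (pu : Per u) (pv : Per v) :
    ∫ p in unitSq, Jac v u p * lap v p
      = (∫ p in unitSq, pz (px u) p * ((pz v p) ^ 2 - (px v p) ^ 2))
        + ∫ p in unitSq, (px (px u) p - pz (pz u) p) * (px v p * pz v p) := by
  have hux : ContDiff ℝ (⊤ : ℕ∞) (px u) := contDiff_px hu
  have huz : ContDiff ℝ (⊤ : ℕ∞) (pz u) := contDiff_pz hu
  have hvx : ContDiff ℝ (⊤ : ℕ∞) (px v) := contDiff_px hv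
  have hvz : ContDiff ℝ (⊤ : ℕ∞) (pz v) := contDiff_pz hv
  have pux : Per (px u) := per_px hu pu
  have puz : Per (pz u) := per_pz hu pu
  have pvx : Per (px v) := per_px hv pv
  have pvz : Per (pz v) := per_pz hv pv
  have hA : ContDiff ℝ (⊤ : ℕ∞) (fun q => pz u q * (px v q * px v q)) := huz.mul (hvx.mul hvx)
  have hB : ContDiff ℝ (⊤ : ℕ∞) (fun q => pz u q * (pz v q * pz v q)) := huz.mul (hvz.mul hvz)
  have hC : ContDiff ℝ (⊤ : ℕ∞) (fun q => px u q * (px v q * pz v q)) := hux.mul (hvx.mul hvz)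
  have hD : ContDiff ℝ (⊤ : ℕ∞) (fun q => pz u q * (px v q * pz v q)) := huz.mul (hvx.mul hvz)
  have hE : ContDiff ℝ (⊤ : ℕ∞) (fun q => px u q * (px v q * px v q)) := hux.mul (hvx.mul hvx)
  have hF : ContDiff ℝ (⊤ : ℕ∞) (fun q => px u q * (pz v q * pz v q)) := hux.mul (hvz.mul hvz)
  have hP : ContDiff ℝ (⊤ : ℕ∞) (fun q => (pz u q * (px v q * px v q) - pz u q * (pz v q * pz v q)) - (px u q * (px v q * pz v q) + px u q * (px v q * pz v q))) := (hA.sub hB).sub (hC.add hC)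
  have hQ : ContDiff ℝ (⊤ : ℕ∞) (fun q => (pz u q * (px v q * pz v q) + pz u q * (px v q * pz v q)) + (px u q * (px v q * px v q) - px u q * (pz v q * pz v q))) := (hD.add hD).add (hE.sub hF)
  have perA : Per (fun q => pz u q * (px v q * px v q)) := puz.mul (pvx.mul pvx)
  have perB : Per (fun q => pz u q * (pz v q * pz v q)) := puz.mul (pvz.mul pvz)
  have perC : Per (fun q => px u q * (px v q * pz v q)) := pux.mul (pvx.mul pvz)
  have perD : Per (fun q => pz u q * (px v q * pz v q)) := puz.mul (pvx.mul pvz)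
  have perE : Per (fun q => px u q * (px v q * px v q)) := pux.mul (pvx.mul pvx)
  have perF : Per (fun q => px u q * (pz v q * pz v q)) := pux.mul (pvz.mul pvz)
  have perP : Per (fun q => (pz u q * (px v q * px v q) - pz u q * (pz v q * pz v q)) - (px u q * (px v q * pz v q) + px u q * (px v q * pz v q))) := (perA.sub perB).sub (perC.add perC)
  have perQ : Per (fun q => (pz u q * (px v q * pz v q) + pz u q * (px v q * pz v q)) + (px u q * (px v q * px v q) - px u q * (pz v q * pz v q))) := (perD.add perD).add (perE.sub perF)
  have hIP : ∫ p in unitSq, px (fun q => (pz u q * (px v q * px v q) - pz u q * (pz v q * pz v q)) - (px u q * (px v q * pz v q) + px u q * (px v q * pz v q))) p = 0 := I_px_zero hP perP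
  have hIQ : ∫ p in unitSq, pz (fun q => (pz u q * (px v q * pz v q) + pz u q * (px v q * pz v q)) + (px u q * (px v q * px v q) - px u q * (pz v q * pz v q))) p = 0 := I_pz_zero hQ perQ
  have key : ∀ p, 2 * (Jac v u p * lap v p)
      = (2 * (pz (px u) p * ((pz v p) ^ 2 - (px v p) ^ 2))
          + 2 * ((px (px u) p - pz (pz u) p) * (px v p * pz v p)))
        + (px (fun q => (pz u q * (px v q * px v q) - pz u q * (pz v q * pz v q)) - (px u q * (px v q * pz v q) + px u q * (px v q * pz v q))) p + pz (fun q => (pz u q * (px v q * pz v q) + pz u q * (px v q * pz v q)) + (px u q * (px v q * px v q) - px u q * (pz v q * pz v q))) p) := by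
    intro p
    rw [px_sub (hA.sub hB) (hC.add hC), px_sub hA hB, px_add hC hC,
      px_mul huz (hvx.mul hvx), px_mul huz (hvz.mul hvz), px_mul hux (hvx.mul hvz),
      px_mul hvx hvx, px_mul hvz hvz, px_mul hvx hvz,
      pz_add (hD.add hD) (hE.sub hF), pz_add hD hD, pz_sub hE hF,
      pz_mul huz (hvx.mul hvz), pz_mul hux (hvx.mul hvx), pz_mul hux (hvz.mul hvz),
      pz_mul hvx hvz, pz_mul hvx hvx, pz_mul hvz hvz]
    simp only [Jac, lap]
    rw [clairaut hu p, clairaut hv p]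
    ring
  -- continuity of the pieces
  have cT1 : Continuous fun p => 2 * (pz (px u) p * ((pz v p) ^ 2 - (px v p) ^ 2)) := by
    apply continuous_const.mul
    exact (cont_pz hux).mul (((cont_pz hv).pow 2).sub ((cont_px hv).pow 2))
  have cT2 : Continuous fun p => 2 * ((px (px u) p - pz (pz u) p) * (px v p * pz v p)) := by
    apply continuous_const.mul
    exact ((cont_px hux).sub (cont_pz huz)).mul ((cont_px hv).mul (cont_pz hv))
  have cP : Continuous (px (fun q => (pz u q * (px v q * px v q) - pz u q * (pz v q * pz v q)) - (px u q * (px v q * pz v q) + px u q * (px v q * pz v q)))) := cont_px hP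
  have cQ : Continuous (pz (fun q => (pz u q * (px v q * pz v q) + pz u q * (px v q * pz v q)) + (px u q * (px v q * px v q) - px u q * (pz v q * pz v q)))) := cont_pz hQ
  have iT1 : IntegrableOn (fun p => 2 * (pz (px u) p * ((pz v p) ^ 2 - (px v p) ^ 2))) unitSq :=
    integrableOn_sq cT1
  have iT2 : IntegrableOn
      (fun p => 2 * ((px (px u) p - pz (pz u) p) * (px v p * pz v p))) unitSq :=
    integrableOn_sq cT2
  have iT12 : IntegrableOn (fun p => 2 * (pz (px u) p * ((pz v p) ^ 2 - (px v p) ^ 2))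
      + 2 * ((px (px u) p - pz (pz u) p) * (px v p * pz v p))) unitSq := iT1.add iT2
  have iP : IntegrableOn (fun p => px (fun q => (pz u q * (px v q * px v q) - pz u q * (pz v q * pz v q)) - (px u q * (px v q * pz v q) + px u q * (px v q * pz v q))) p) unitSq := integrableOn_sq cP
  have iQ : IntegrableOn (fun p => pz (fun q => (pz u q * (px v q * pz v q) + pz u q * (px v q * pz v q)) + (px u q * (px v q * px v q) - px u q * (pz v q * pz v q))) p) unitSq := integrableOn_sq cQ
  have iPQ : IntegrableOn (fun p => px (fun q => (pz u q * (px v q * px v q) - pz u q * (pz v q * pz v q)) - (px u q * (px v q * pz v q) + px u q * (px v q * pz v q))) p + pz (fun q => (pz u q * (px v q * pz v q) + pz u q * (px v q * pz v q)) + (px u q * (px v q * px v q) - px u q * (pz v q * pz v q))) p) unitSq := iP.add iQ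
  have keyf : (fun p => 2 * (Jac v u p * lap v p))
      = fun p => (2 * (pz (px u) p * ((pz v p) ^ 2 - (px v p) ^ 2))
          + 2 * ((px (px u) p - pz (pz u) p) * (px v p * pz v p)))
        + (px (fun q => (pz u q * (px v q * px v q) - pz u q * (pz v q * pz v q)) - (px u q * (px v q * pz v q) + px u q * (px v q * pz v q))) p + pz (fun q => (pz u q * (px v q * pz v q) + pz u q * (px v q * pz v q)) + (px u q * (px v q * px v q) - px u q * (pz v q * pz v q))) p) := funext key
  have Ieq : ∫ p in unitSq, 2 * (Jac v u p * lap v p)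
      = ((∫ p in unitSq, 2 * (pz (px u) p * ((pz v p) ^ 2 - (px v p) ^ 2)))
          + ∫ p in unitSq, 2 * ((px (px u) p - pz (pz u) p) * (px v p * pz v p)))
        + ((∫ p in unitSq, px (fun q => (pz u q * (px v q * px v q) - pz u q * (pz v q * pz v q)) - (px u q * (px v q * pz v q) + px u q * (px v q * pz v q))) p) + ∫ p in unitSq, pz (fun q => (pz u q * (px v q * pz v q) + pz u q * (px v q * pz v q)) + (px u q * (px v q * px v q) - px u q * (pz v q * pz v q))) p) := by
    rw [show (∫ p in unitSq, 2 * (Jac v u p * lap v p))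
        = ∫ p in unitSq, ((2 * (pz (px u) p * ((pz v p) ^ 2 - (px v p) ^ 2))
          + 2 * ((px (px u) p - pz (pz u) p) * (px v p * pz v p)))
          + (px (fun q => (pz u q * (px v q * px v q) - pz u q * (pz v q * pz v q)) - (px u q * (px v q * pz v q) + px u q * (px v q * pz v q))) p + pz (fun q => (pz u q * (px v q * pz v q) + pz u q * (px v q * pz v q)) + (px u q * (px v q * px v q) - px u q * (pz v q * pz v q))) p)) from by rw [keyf]]
    rw [integral_add iT12 iPQ, integral_add iT1 iT2, integral_add iP iQ]
  rw [hIP, hIQ] at Ieq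
  rw [integral_const_mul, integral_const_mul, integral_const_mul] at Ieq
  have e1 : ∫ p in unitSq, pz (px u) p * ((pz v p) ^ 2 - (px v p) ^ 2)
      = ∫ p in unitSq, pz (px u) p * ((pz v p) ^ 2 - (px v p) ^ 2) := rfl
  linarith [Ieq]

end H

set_option maxHeartbeats 2000000 in
/-- There is `C > 0` such that for all smooth 1-periodic
zero-mean `u, v`, `|∫_D J(v,u) Δv| ≤ C ‖Δu‖ ‖∇v‖ ‖Δv‖`. -/
theorem jacobian_trilinear_bound :
    ∃ C : ℝ, 0 < C ∧
      ∀ u v : ℝ × ℝ → ℝ,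
        ContDiff ℝ (⊤ : ℕ∞) u → ContDiff ℝ (⊤ : ℕ∞) v → Per u → Per v →
        (∫ p in unitSq, u p) = 0 → (∫ p in unitSq, v p) = 0 →
        |∫ p in unitSq, Jac v u p * lap v p| ≤
          C * Real.sqrt (∫ p in unitSq, (lap u p) ^ 2) *
            Real.sqrt (∫ p in unitSq, ((px v p) ^ 2 + (pz v p) ^ 2)) *
            Real.sqrt (∫ p in unitSq, (lap v p) ^ 2) := by
  refine ⟨12, by norm_num, ?_⟩
  intro u v hu hv pu pv _ _
  have cvx : Continuous (px v) := cont_px hv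
  have cvz : Continuous (pz v) := cont_pz hv
  have cuxz : Continuous (pz (px u)) := cont_pz (contDiff_px hu)
  have cuxx : Continuous (px (px u)) := cont_px (contDiff_px hu)
  have cuzz : Continuous (pz (pz u)) := cont_pz (contDiff_pz hu)
  set U : ℝ := Real.sqrt (∫ p in unitSq, (lap u p) ^ 2) with hUdef
  set Pn : ℝ := Real.sqrt (∫ p in unitSq, ((px v p) ^ 2 + (pz v p) ^ 2)) with hPdef
  set Qn : ℝ := Real.sqrt (∫ p in unitSq, (lap v p) ^ 2) with hQdef
  have hU0 : 0 ≤ U := Real.sqrt_nonneg _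
  have hPn0 : 0 ≤ Pn := Real.sqrt_nonneg _
  have hQn0 : 0 ≤ Qn := Real.sqrt_nonneg _
  have hUsq : U ^ 2 = ∫ p in unitSq, (lap u p) ^ 2 :=
    Real.sq_sqrt (sq_integral_nonneg (lap u))
  have hQsq : Qn ^ 2 = ∫ p in unitSq, (lap v p) ^ 2 :=
    Real.sq_sqrt (sq_integral_nonneg (lap v))
  have hPsq : Pn ^ 2 = ∫ p in unitSq, ((px v p) ^ 2 + (pz v p) ^ 2) := by
    apply Real.sq_sqrt
    exact setIntegral_nonneg isCompact_unitSq.isClosed.measurableSet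
      (fun p _ => add_nonneg (sq_nonneg _) (sq_nonneg _))
  have hsplit : ∫ p in unitSq, ((px v p) ^ 2 + (pz v p) ^ 2)
      = (∫ p in unitSq, (px v p) ^ 2) + ∫ p in unitSq, (pz v p) ^ 2 :=
    integral_add (integrableOn_sq (cvx.pow 2)) (integrableOn_sq (cvz.pow 2))
  have hvxP : ∫ p in unitSq, (px v p) ^ 2 ≤ Pn ^ 2 := by
    rw [hPsq, hsplit]; linarith [sq_integral_nonneg (pz v)]
  have hvzP : ∫ p in unitSq, (pz v p) ^ 2 ≤ Pn ^ 2 := by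
    rw [hPsq, hsplit]; linarith [sq_integral_nonneg (px v)]
  have hvxQ : ∫ p in unitSq, (px v p) ^ 2 ≤ Qn ^ 2 := by
    rw [hQsq]; exact (poincare_x hv pv).trans (vxx_le hv pv)
  have hvzQ : ∫ p in unitSq, (pz v p) ^ 2 ≤ Qn ^ 2 := by
    rw [hQsq]; exact (poincare_z hv pv).trans (vzz_le hv pv)
  have hvxxQ : ∫ p in unitSq, (px (px v) p) ^ 2 ≤ Qn ^ 2 := by rw [hQsq]; exact vxx_le hv pv
  have hvzzQ : ∫ p in unitSq, (pz (pz v) p) ^ 2 ≤ Qn ^ 2 := by rw [hQsq]; exact vzz_le hv pv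
  have hvxzQ : ∫ p in unitSq, (pz (px v) p) ^ 2 ≤ Qn ^ 2 := by rw [hQsq]; exact vxz_le hv pv
  have hvxzQ' : ∫ p in unitSq, (px (pz v) p) ^ 2 ≤ Qn ^ 2 := by rw [hQsq]; exact vxz_le' hv pv
  have huxzU : ∫ p in unitSq, (pz (px u) p) ^ 2 ≤ U ^ 2 := by rw [hUsq]; exact vxz_le hu pu
  have huxxU : ∫ p in unitSq, (px (px u) p) ^ 2 ≤ U ^ 2 := by rw [hUsq]; exact vxx_le hu pu
  have huzzU : ∫ p in unitSq, (pz (pz u) p) ^ 2 ≤ U ^ 2 := by rw [hUsq]; exact vzz_le hu pu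
  have sqrt_le : ∀ {a b : ℝ}, a ≤ b ^ 2 → 0 ≤ b → Real.sqrt a ≤ b := by
    intro a b h hb
    calc Real.sqrt a ≤ Real.sqrt (b ^ 2) := Real.sqrt_le_sqrt h
      _ = b := by rw [Real.sqrt_sq hb]
  set R : ℝ := Pn * Qn with hRdef
  have hR0 : 0 ≤ R := mul_nonneg hPn0 hQn0
  -- Ladyzhenskaya bounds for px v and pz v
  have lady_bound : ∀ f : ℝ × ℝ → ℝ, ContDiff ℝ (⊤ : ℕ∞) f →
      (∫ p in unitSq, f p ^ 2) ≤ Pn ^ 2 → (∫ p in unitSq, f p ^ 2) ≤ Qn ^ 2 →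
      (∫ p in unitSq, (px f p) ^ 2) ≤ Qn ^ 2 → (∫ p in unitSq, (pz f p) ^ 2) ≤ Qn ^ 2 →
      ∫ p in unitSq, f p ^ 4 ≤ 9 * R ^ 2 := by
    intro f hf h1 h2 h3 h4
    have hf2 : 0 ≤ ∫ p in unitSq, f p ^ 2 := sq_integral_nonneg f
    have s1 : ∫ p in unitSq, f p ^ 2 ≤ R := by
      have hm : (∫ p in unitSq, f p ^ 2) * (∫ p in unitSq, f p ^ 2) ≤ Pn ^ 2 * Qn ^ 2 :=
        mul_le_mul h1 h2 hf2 (sq_nonneg Pn)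
      nlinarith [hm, hf2, hR0]
    have s2 : Real.sqrt (∫ p in unitSq, f p ^ 2) ≤ Pn := sqrt_le h1 hPn0
    have s2' : Real.sqrt (∫ p in unitSq, (pz f p) ^ 2) ≤ Qn := sqrt_le h4 hQn0
    have s2'' : Real.sqrt (∫ p in unitSq, (px f p) ^ 2) ≤ Qn := sqrt_le h3 hQn0
    have s3 : ∫ p in unitSq, |pz (fun q => f q * f q) p| ≤ 2 * R := by
      refine (bound_abs_pz hf).trans ?_
      have hmm := mul_le_mul s2 s2' (Real.sqrt_nonneg _) hPn0
      calc 2 * Real.sqrt (∫ p in unitSq, f p ^ 2) * Real.sqrt (∫ p in unitSq, (pz f p) ^ 2)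
          = 2 * (Real.sqrt (∫ p in unitSq, f p ^ 2) * Real.sqrt (∫ p in unitSq, (pz f p) ^ 2)) := by
            ring
        _ ≤ 2 * (Pn * Qn) := by linarith
        _ = 2 * R := by rw [hRdef]
    have s4 : ∫ p in unitSq, |px (fun q => f q * f q) p| ≤ 2 * R := by
      refine (bound_abs_px hf).trans ?_
      have hmm := mul_le_mul s2 s2'' (Real.sqrt_nonneg _) hPn0
      calc 2 * Real.sqrt (∫ p in unitSq, f p ^ 2) * Real.sqrt (∫ p in unitSq, (px f p) ^ 2)
          = 2 * (Real.sqrt (∫ p in unitSq, f p ^ 2) * Real.sqrt (∫ p in unitSq, (px f p) ^ 2)) := by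
            ring
        _ ≤ 2 * (Pn * Qn) := by linarith
        _ = 2 * R := by rw [hRdef]
    have habs1 : 0 ≤ ∫ p in unitSq, |pz (fun q => f q * f q) p| :=
      setIntegral_nonneg isCompact_unitSq.isClosed.measurableSet (fun p _ => abs_nonneg _)
    have habs2 : 0 ≤ ∫ p in unitSq, |px (fun q => f q * f q) p| :=
      setIntegral_nonneg isCompact_unitSq.isClosed.measurableSet (fun p _ => abs_nonneg _)
    have hl := lady hf
    have F1 : (∫ p in unitSq, f p ^ 2) + (∫ p in unitSq, |pz (fun q => f q * f q) p|) ≤ 3 * R := by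
      linarith
    have F2 : (∫ p in unitSq, f p ^ 2) + (∫ p in unitSq, |px (fun q => f q * f q) p|) ≤ 3 * R := by
      linarith
    have F2nn : 0 ≤ (∫ p in unitSq, f p ^ 2) + (∫ p in unitSq, |px (fun q => f q * f q) p|) := by
      linarith
    calc ∫ p in unitSq, f p ^ 4
        ≤ ((∫ p in unitSq, f p ^ 2) + (∫ p in unitSq, |pz (fun q => f q * f q) p|))
          * ((∫ p in unitSq, f p ^ 2) + (∫ p in unitSq, |px (fun q => f q * f q) p|)) := hl
      _ ≤ (3 * R) * (3 * R) := mul_le_mul F1 F2 F2nn (by linarith)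
      _ = 9 * R ^ 2 := by ring
  have L4x : ∫ p in unitSq, (px v p) ^ 4 ≤ 9 * R ^ 2 :=
    lady_bound (px v) (contDiff_px hv) hvxP hvxQ hvxxQ hvxzQ
  have L4z : ∫ p in unitSq, (pz v p) ^ 4 ≤ 9 * R ^ 2 :=
    lady_bound (pz v) (contDiff_pz hv) hvzP hvzQ hvxzQ' hvzzQ
  have sq4x : Real.sqrt (∫ p in unitSq, ((px v p) ^ 2) ^ 2) ≤ 3 * R := by
    apply sqrt_le _ (by positivity)
    rw [Icongr (fun p => by ring : ∀ p, ((px v p) ^ 2) ^ 2 = (px v p) ^ 4)]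
    have : (3 * R) ^ 2 = 9 * R ^ 2 := by ring
    linarith
  have sq4z : Real.sqrt (∫ p in unitSq, ((pz v p) ^ 2) ^ 2) ≤ 3 * R := by
    apply sqrt_le _ (by positivity)
    rw [Icongr (fun p => by ring : ∀ p, ((pz v p) ^ 2) ^ 2 = (pz v p) ^ 4)]
    have : (3 * R) ^ 2 = 9 * R ^ 2 := by ring
    linarith
  have sqvv : Real.sqrt (∫ p in unitSq, (px v p * pz v p) ^ 2) ≤ 3 * R := by
    apply sqrt_le _ (by positivity)
    have e : ∫ p in unitSq, (px v p * pz v p) ^ 2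
        = ∫ p in unitSq, (px v p) ^ 2 * (pz v p) ^ 2 := Icongr (fun p => by ring)
    have hcs := CS (f := fun p => (px v p) ^ 2) (g := fun p => (pz v p) ^ 2)
      (cvx.pow 2) (cvz.pow 2)
    have hnn : 0 ≤ ∫ p in unitSq, (px v p) ^ 2 * (pz v p) ^ 2 :=
      setIntegral_nonneg isCompact_unitSq.isClosed.measurableSet
        (fun p _ => mul_nonneg (sq_nonneg _) (sq_nonneg _))
    rw [abs_of_nonneg hnn] at hcs
    have h9 : Real.sqrt (∫ p in unitSq, ((px v p) ^ 2) ^ 2)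
        * Real.sqrt (∫ p in unitSq, ((pz v p) ^ 2) ^ 2) ≤ (3 * R) * (3 * R) :=
      mul_le_mul sq4x sq4z (Real.sqrt_nonneg _) (by positivity)
    rw [e]
    have h99 : (3 * R) * (3 * R) = (3 * R) ^ 2 := by ring
    linarith
  -- CS bounds on the four pieces
  have sU1 : Real.sqrt (∫ p in unitSq, (pz (px u) p) ^ 2) ≤ U := sqrt_le huxzU hU0
  have sU2 : Real.sqrt (∫ p in unitSq, (px (px u) p) ^ 2) ≤ U := sqrt_le huxxU hU0
  have sU3 : Real.sqrt (∫ p in unitSq, (pz (pz u) p) ^ 2) ≤ U := sqrt_le huzzU hU0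
  have b1 : |∫ p in unitSq, pz (px u) p * (pz v p) ^ 2| ≤ U * (3 * R) := by
    refine (CS cuxz (cvz.pow 2)).trans ?_
    exact mul_le_mul sU1 sq4z (Real.sqrt_nonneg _) hU0
  have b2 : |∫ p in unitSq, pz (px u) p * (px v p) ^ 2| ≤ U * (3 * R) := by
    refine (CS cuxz (cvx.pow 2)).trans ?_
    exact mul_le_mul sU1 sq4x (Real.sqrt_nonneg _) hU0
  have b3 : |∫ p in unitSq, px (px u) p * (px v p * pz v p)| ≤ U * (3 * R) := by
    refine (CS cuxx (cvx.mul cvz)).trans ?_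
    exact mul_le_mul sU2 sqvv (Real.sqrt_nonneg _) hU0
  have b4 : |∫ p in unitSq, pz (pz u) p * (px v p * pz v p)| ≤ U * (3 * R) := by
    refine (CS cuzz (cvx.mul cvz)).trans ?_
    exact mul_le_mul sU3 sqvv (Real.sqrt_nonneg _) hU0
  -- split T1 and T2
  have eT1 : ∫ p in unitSq, pz (px u) p * ((pz v p) ^ 2 - (px v p) ^ 2)
      = (∫ p in unitSq, pz (px u) p * (pz v p) ^ 2)
        - ∫ p in unitSq, pz (px u) p * (px v p) ^ 2 := by
    rw [Icongr (fun p => by ring :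
      ∀ p, pz (px u) p * ((pz v p) ^ 2 - (px v p) ^ 2)
        = pz (px u) p * (pz v p) ^ 2 - pz (px u) p * (px v p) ^ 2)]
    exact integral_sub (integrableOn_sq (cuxz.mul (cvz.pow 2)))
      (integrableOn_sq (cuxz.mul (cvx.pow 2)))
  have eT2 : ∫ p in unitSq, (px (px u) p - pz (pz u) p) * (px v p * pz v p)
      = (∫ p in unitSq, px (px u) p * (px v p * pz v p))
        - ∫ p in unitSq, pz (pz u) p * (px v p * pz v p) := by
    rw [Icongr (fun p => by ring :
      ∀ p, (px (px u) p - pz (pz u) p) * (px v p * pz v p)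
        = px (px u) p * (px v p * pz v p) - pz (pz u) p * (px v p * pz v p))]
    exact integral_sub (integrableOn_sq (cuxx.mul (cvx.mul cvz)))
      (integrableOn_sq (cuzz.mul (cvx.mul cvz)))
  have hmain := main_identity hu hv pu pv
  rw [hmain, eT1, eT2]
  have habs := abs_add_le
    ((∫ p in unitSq, pz (px u) p * (pz v p) ^ 2)
      - ∫ p in unitSq, pz (px u) p * (px v p) ^ 2)
    ((∫ p in unitSq, px (px u) p * (px v p * pz v p))
      - ∫ p in unitSq, pz (pz u) p * (px v p * pz v p))
  have h1 := abs_sub ((∫ p in unitSq, pz (px u) p * (pz v p) ^ 2))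
    (∫ p in unitSq, pz (px u) p * (px v p) ^ 2)
  have h2 := abs_sub ((∫ p in unitSq, px (px u) p * (px v p * pz v p)))
    (∫ p in unitSq, pz (pz u) p * (px v p * pz v p))
  calc |((∫ p in unitSq, pz (px u) p * (pz v p) ^ 2)
          - ∫ p in unitSq, pz (px u) p * (px v p) ^ 2)
        + ((∫ p in unitSq, px (px u) p * (px v p * pz v p))
          - ∫ p in unitSq, pz (pz u) p * (px v p * pz v p))|
      ≤ 4 * (U * (3 * R)) := by
        linarith [habs, b1, b2, b3, b4, h1, h2]
    _ = 12 * U * Pn * Qn := by rw [hRdef]; ring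
end

section
/- Let γ ∈ (0,1], b ≥ 0 and T > 0. Then there exists a constant C ≥ 1, depending only on γ, b and T, such that for every a ≥ 0 and every continuous nonnegative function u : [0,T] → ℝ satisfying u(t) ≤ a + b ∫₀ᵗ (t − s)^{γ−1} u(s) ds for all t ∈ [0,T], one has u(t) ≤ a C for all t ∈ [0,T]. -/
/-!
Bielecki's weighted-norm argument. Against the weight `exp (-c t)` the kernel `(t - s) ^ (γ - 1)`
acts with norm at most `∫₀^∞ r ^ (γ - 1) exp (-c r) dr = Γ(γ) / c ^ γ`, so for `c` large the
integral term is at most half the weighted maximum `M` of `u`. Evaluating the inequality where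
that maximum is attained gives `M ≤ a + M / 2`, hence `u t ≤ 2 a exp (c t)`.
-/

open Real MeasureTheory intervalIntegral Set

lemma integral_rpow_mul_exp_neg_mul_le_Gamma {γ c t : ℝ} (hγ : 0 < γ) (hc : 0 < c) (ht : 0 ≤ t) :
    ∫ r in (0:ℝ)..t, r ^ (γ - 1) * exp (-(c * r)) ≤ (1 / c) ^ γ * Gamma γ := by
  have hint : IntegrableOn (fun r : ℝ => r ^ (γ - 1) * exp (-(c * r))) (Ioi 0) := by
    simpa [neg_mul] using
      integrableOn_rpow_mul_exp_neg_mul_rpow (p := 1) (by linarith : -1 < γ - 1) one_pos hc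
  rw [integral_of_le ht, ← integral_rpow_mul_exp_neg_mul_Ioi hγ hc]
  exact setIntegral_mono_set hint
    (ae_restrict_of_forall_mem measurableSet_Ioi fun r hr =>
      mul_nonneg (rpow_nonneg (le_of_lt hr) _) (exp_pos _).le)
    Ioc_subset_Ioi_self.eventuallyLE

lemma integral_comp_sub_left_mul_exp (k : ℝ → ℝ) (c t : ℝ) :
    ∫ s in (0:ℝ)..t, k (t - s) * exp (c * s)
      = exp (c * t) * ∫ r in (0:ℝ)..t, k r * exp (-(c * r)) := by
  have hsplit : ∀ s,
      k (t - s) * exp (c * s) = exp (c * t) * (k (t - s) * exp (-(c * (t - s)))) := by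
    intro s
    rw [mul_left_comm, ← exp_add]
    ring_nf
  simp_rw [hsplit, intervalIntegral.integral_const_mul]
  simpa using integral_comp_sub_left (fun r => k r * exp (-(c * r))) (a := 0) (b := t) t

lemma IsCompact.exists_forall_le_mul_exp {K : Set ℝ} (hK : IsCompact K) (hne : K.Nonempty)
    {u : ℝ → ℝ} (hu : ContinuousOn u K) (c : ℝ) :
    ∃ t₀ ∈ K, ∀ s ∈ K, u s ≤ u t₀ * exp (-(c * t₀)) * exp (c * s) := by
  have hweight : Continuous fun s => exp (-(c * s)) := by fun_prop
  obtain ⟨t₀, ht₀, hmax⟩ := hK.exists_isMaxOn hne (hu.mul hweight.continuousOn)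
  refine ⟨t₀, ht₀, fun s hs => ?_⟩
  calc u s = u s * exp (-(c * s)) * exp (c * s) := by
          rw [mul_assoc, ← exp_add, neg_add_cancel, exp_zero, mul_one]
    _ ≤ u t₀ * exp (-(c * t₀)) * exp (c * s) :=
        mul_le_mul_of_nonneg_right (hmax hs) (exp_pos _).le

lemma integral_sub_rpow_mul_le {γ c t M : ℝ} {u : ℝ → ℝ} (hγ : 0 < γ) (ht : 0 ≤ t)
    (hu : ContinuousOn u (Icc 0 t)) (huM : ∀ s ∈ Icc 0 t, u s ≤ M * exp (c * s)) :
    ∫ s in (0:ℝ)..t, (t - s) ^ (γ - 1) * u s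
      ≤ M * exp (c * t) * ∫ r in (0:ℝ)..t, r ^ (γ - 1) * exp (-(c * r)) := by
  have hker : IntervalIntegrable (fun s => (t - s) ^ (γ - 1)) volume 0 t := by
    simpa using
      ((intervalIntegrable_rpow' (a := 0) (b := t) (by linarith : -1 < γ - 1)).comp_sub_left t).symm
  rw [← uIcc_of_le ht] at hu
  calc ∫ s in (0:ℝ)..t, (t - s) ^ (γ - 1) * u s
      ≤ ∫ s in (0:ℝ)..t, (t - s) ^ (γ - 1) * (M * exp (c * s)) := by
        refine integral_mono_on ht (hker.mul_continuousOn hu)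
          (hker.mul_continuousOn (by fun_prop)) fun s hs => ?_
        exact mul_le_mul_of_nonneg_left (huM s hs) (rpow_nonneg (by linarith [hs.2]) _)
    _ = M * exp (c * t) * ∫ r in (0:ℝ)..t, r ^ (γ - 1) * exp (-(c * r)) := by
        simp_rw [mul_left_comm _ M, intervalIntegral.integral_const_mul,
          integral_comp_sub_left_mul_exp (fun r => r ^ (γ - 1))]
        ring

theorem le_two_mul_exp_of_le_add_integral {γ b c T a : ℝ} {u : ℝ → ℝ} (hγ : 0 < γ)
    (hb : 0 ≤ b) (hc : 0 < c) (ha : 0 ≤ a) (hsmall : b * ((1 / c) ^ γ * Gamma γ) ≤ 1 / 2)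
    (hu : ContinuousOn u (Icc 0 T))
    (hineq : ∀ t ∈ Icc 0 T, u t ≤ a + b * ∫ s in (0:ℝ)..t, (t - s) ^ (γ - 1) * u s) :
    ∀ t ∈ Icc 0 T, u t ≤ 2 * a * exp (c * t) := by
  intro t ht
  obtain ⟨t₀, ht₀, hmax⟩ := isCompact_Icc.exists_forall_le_mul_exp ⟨t, ht⟩ hu c
  set M := u t₀ * exp (-(c * t₀))
  have hM : M ≤ 2 * a := by
    rcases le_or_gt M 0 with hM_nonpos | hM_pos
    · linarith
    have hut₀ : u t₀ = M * exp (c * t₀) := by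
      rw [mul_assoc, ← exp_add, neg_add_cancel, exp_zero, mul_one]
    have hconv := integral_sub_rpow_mul_le hγ ht₀.1 (hu.mono (Icc_subset_Icc_right ht₀.2))
      fun s hs => hmax s ⟨hs.1, hs.2.trans ht₀.2⟩
    have hkernel := integral_rpow_mul_exp_neg_mul_le_Gamma hγ hc ht₀.1
    have hexp : 1 ≤ exp (c * t₀) := one_le_exp (mul_nonneg hc.le ht₀.1)
    have : M * exp (c * t₀) ≤ a + M * exp (c * t₀) / 2 := by
      calc M * exp (c * t₀) = u t₀ := hut₀.symm
        _ ≤ a + b * (M * exp (c * t₀) * ∫ r in (0:ℝ)..t₀, r ^ (γ - 1) * exp (-(c * r))) := by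
          grw [← hconv]; exact hineq t₀ ht₀
        _ ≤ a + M * exp (c * t₀) / 2 := by
          grw [hkernel]
          nlinarith [mul_le_mul_of_nonneg_left hsmall (by positivity : 0 ≤ M * exp (c * t₀))]
    nlinarith
  calc u t ≤ M * exp (c * t) := hmax t ht
    _ ≤ 2 * a * exp (c * t) := by gcongr

lemma exists_pos_mul_one_div_rpow_mul_le {b γ K : ℝ} (hb : 0 ≤ b) (hγ : 0 < γ) (hK : 0 ≤ K) :
    ∃ c > 0, b * ((1 / c) ^ γ * K) ≤ 1 / 2 := by
  set B := 2 * b * K + 1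
  have hB : 0 < B := by positivity
  refine ⟨B ^ γ⁻¹, by positivity, ?_⟩
  rw [one_div, inv_rpow (by positivity), rpow_inv_rpow hB.le hγ.ne', ← mul_assoc, mul_comm b,
    mul_assoc, inv_mul_le_iff₀ hB]
  linarith

/-- Gronwall lemma with a weakly singular kernel. For
`γ ∈ (0,1]`, `b ≥ 0`, `T > 0` there is a constant `C ≥ 1` (depending only on
`γ, b, T`) such that any continuous nonnegative `u : [0,T] → ℝ` satisfying
`u(t) ≤ a + b ∫₀ᵗ (t−s)^{γ−1} u(s) ds` on `[0,T]` (with `a ≥ 0`) satisfies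
`u(t) ≤ a C` on `[0,T]`. -/
theorem singular_gronwall
    (γ b T : ℝ) (hγ : γ ∈ Set.Ioc (0:ℝ) 1) (hb : 0 ≤ b) (hT : 0 < T) :
    ∃ C : ℝ, 1 ≤ C ∧
      ∀ a : ℝ, 0 ≤ a → ∀ u : ℝ → ℝ,
        ContinuousOn u (Set.Icc 0 T) →
        (∀ t ∈ Set.Icc (0:ℝ) T, 0 ≤ u t) →
        (∀ t ∈ Set.Icc (0:ℝ) T,
          u t ≤ a + b * ∫ s in (0:ℝ)..t, (t - s) ^ (γ - 1) * u s) →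
        ∀ t ∈ Set.Icc (0:ℝ) T, u t ≤ a * C := by
  obtain ⟨c, hc, hsmall⟩ :=
    exists_pos_mul_one_div_rpow_mul_le hb hγ.1 (Gamma_nonneg_of_nonneg hγ.1.le)
  have hexp : 1 ≤ exp (c * T) := one_le_exp (by positivity)
  refine ⟨2 * exp (c * T), by linarith, fun a ha u hu _ hineq t ht => ?_⟩
  calc u t ≤ 2 * a * exp (c * t) :=
        le_two_mul_exp_of_le_add_integral hγ.1 hb hc ha hsmall hu hineq t ht
    _ = a * (2 * exp (c * t)) := by ring
    _ ≤ a * (2 * exp (c * T)) := by gcongr; exact ht.2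
end
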